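/- arXiv:1510.06437 — 8 statements merged into one kernel-verified Lean document; each statement's English description precedes it below -/
import Mathlib

section
/- Let X : P → {0,1} be an assignment that minimizes the energy formula E(X) = w_L·E_L(X) + w_M·E_M(X) + E_C(X) + E_S(X). Assume all savings are nonnegative and w_L > max_{p∈P} c_p. Then X selects at least one plan per query: for every query q ∈ Q there exists a plan p ∈ P_q with X(p) = 1. -/
open Finset
open scoped Classical

noncomputable section

variable {A Qt : Type*}

/-- Energy term motivating at least one plan selection per query: `E_L(X) = -Σ_{p∈P} X(p)`. -/
def EL (P : Finset A) (X : A → ℝ) : ℝ := -∑ p ∈ P, X p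

/-- Energy term penalizing several plans for one query:
`E_M(X) = Σ_{q∈Q} Σ_{{p1,p2}⊆P_q, p1≠p2} X(p1)·X(p2)` (each unordered pair counted once,
realized as half the sum over ordered pairs of distinct plans). -/
def EM (Q : Finset Qt) (Pq : Qt → Finset A) (X : A → ℝ) : ℝ :=
  ∑ q ∈ Q, (1 / 2) * ∑ pp ∈ (Pq q).offDiag, X pp.1 * X pp.2

/-- Execution-cost term `E_C(X) = Σ_{p∈P} c_p·X(p)`. -/
def EC (P : Finset A) (c : A → ℝ) (X : A → ℝ) : ℝ := ∑ p ∈ P, c p * X p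

/-- Savings term `E_S(X) = -Σ_{{p1,p2}⊆P, p1≠p2} s_{p1,p2}·X(p1)·X(p2)` (each unordered pair
counted once; `s` is symmetric, so this is half the sum over ordered pairs of distinct plans). -/
def ES (P : Finset A) (s : A → A → ℝ) (X : A → ℝ) : ℝ :=
  -((1 / 2) * ∑ pp ∈ P.offDiag, s pp.1 pp.2 * X pp.1 * X pp.2)

/-- The energy formula `E(X) = w_L·E_L(X) + w_M·E_M(X) + E_C(X) + E_S(X)`. -/
def energy (P : Finset A) (Q : Finset Qt) (Pq : Qt → Finset A)
    (c : A → ℝ) (s : A → A → ℝ) (wL wM : ℝ) (X : A → ℝ) : ℝ :=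
  wL * EL P X + wM * EM Q Pq X + EC P c X + ES P s X

/-- `X : P → {0,1}` is an assignment. -/
def IsAssignment (P : Finset A) (X : A → ℝ) : Prop := ∀ p ∈ P, X p = 0 ∨ X p = 1

/-- A valid assignment selects exactly one plan per query. -/
def IsValid (Q : Finset Qt) (Pq : Qt → Finset A) (X : A → ℝ) : Prop :=
  ∀ q ∈ Q, ∃! p, p ∈ Pq q ∧ X p = 1

/-- Execution cost of a plan set: `C(P_e) = Σ_{p∈P_e} c_p - Σ_{{p1,p2}⊆P_e, p1≠p2} s_{p1,p2}`
(each unordered pair counted once; `s` is symmetric). -/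
def cost (c : A → ℝ) (s : A → A → ℝ) (Pe : Finset A) : ℝ :=
  ∑ p ∈ Pe, c p - (1 / 2) * ∑ pp ∈ Pe.offDiag, s pp.1 pp.2

/-- The set of plans selected for execution by an assignment. -/
def selected (P : Finset A) (X : A → ℝ) : Finset A := P.filter fun p => X p = 1

/-- a minimizer of the energy formula selects at least one plan per query,
assuming nonnegative savings and `w_L > max_{p∈P} c_p`. -/
theorem energy_minimizer_at_least_one_plan
(P : Finset A) (Q : Finset Qt) (Pq : Qt → Finset A)
    (c : A → ℝ) (s : A → A → ℝ) (wL wM : ℝ)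
    (hP : P = Q.biUnion Pq)
    (hdisj : ∀ q1 ∈ Q, ∀ q2 ∈ Q, q1 ≠ q2 → Disjoint (Pq q1) (Pq q2))
    (hnonempty : ∀ q ∈ Q, (Pq q).Nonempty)
    (hsym : ∀ p1 p2 : A, s p1 p2 = s p2 p1)
    (hsdiag : ∀ p : A, s p p = 0)
    (hsnn : ∀ p1 ∈ P, ∀ p2 ∈ P, 0 ≤ s p1 p2)
    (hwL : ∀ p ∈ P, c p < wL)
    (X : A → ℝ) (hX : IsAssignment P X)
    (hmin : ∀ Y : A → ℝ, IsAssignment P Y →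
      energy P Q Pq c s wL wM X ≤ energy P Q Pq c s wL wM Y) :
    ∀ q ∈ Q, ∃ p ∈ Pq q, X p = 1 := by
  intro q hq
  by_contra hno
  push_neg at hno
  obtain ⟨p0, hp0⟩ := hnonempty q hq
  have hsub : Pq q ⊆ P := by
    rw [hP]; intro p hp; exact Finset.mem_biUnion.2 ⟨q, hq, hp⟩
  have hX0 : ∀ p ∈ Pq q, X p = 0 := by
    intro p hp
    rcases hX p (hsub hp) with h | h
    · exact h
    · exact absurd h (hno p hp)
  have hp0P : p0 ∈ P := hsub hp0
  set Y : A → ℝ := Function.update X p0 1 with hYdef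
  have hYp0 : Y p0 = 1 := Function.update_self _ _ _
  have hYne : ∀ p, p ≠ p0 → Y p = X p := fun p h => Function.update_of_ne h _ _
  have hYass : IsAssignment P Y := by
    intro p hp
    by_cases h : p = p0
    · subst h; right; exact hYp0
    · rw [hYne p h]; exact hX p hp
  have hXnn : ∀ p ∈ P, 0 ≤ X p := by
    intro p hp; rcases hX p hp with h | h <;> simp [h]
  have hYX : ∀ p ∈ P, X p ≤ Y p := by
    intro p hp
    by_cases h : p = p0
    · rw [h, hYp0, hX0 p0 hp0]; norm_num
    · rw [hYne p h]
  have hYnn : ∀ p ∈ P, 0 ≤ Y p := fun p hp => le_trans (hXnn p hp) (hYX p hp)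
  have hdiff : ∑ p ∈ P \ {p0}, Y p = ∑ p ∈ P \ {p0}, X p :=
    Finset.sum_congr rfl fun p hp => hYne p (by simp [Finset.mem_sdiff] at hp; exact hp.2)
  have hEL : EL P Y = EL P X - 1 := by
    unfold EL
    rw [Finset.sum_eq_sum_sdiff_singleton_add hp0P Y,
        Finset.sum_eq_sum_sdiff_singleton_add hp0P X, hdiff, hYp0, hX0 p0 hp0]
    ring
  have hdiffc : ∑ p ∈ P \ {p0}, c p * Y p = ∑ p ∈ P \ {p0}, c p * X p :=
    Finset.sum_congr rfl fun p hp => by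
      rw [hYne p (by simp [Finset.mem_sdiff] at hp; exact hp.2)]
  have hEC : EC P c Y = EC P c X + c p0 := by
    unfold EC
    rw [Finset.sum_eq_sum_sdiff_singleton_add hp0P (fun p => c p * Y p),
        Finset.sum_eq_sum_sdiff_singleton_add hp0P (fun p => c p * X p),
        hdiffc, hYp0, hX0 p0 hp0]
    ring
  have hEM : EM Q Pq Y = EM Q Pq X := by
    unfold EM
    refine Finset.sum_congr rfl fun q' hq' => ?_
    congr 1
    refine Finset.sum_congr rfl fun pp hpp => ?_
    obtain ⟨h1, h2, h12⟩ := Finset.mem_offDiag.1 hpp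
    by_cases hq'q : q' = q
    · subst hq'q
      by_cases hp1 : pp.1 = p0
      · have h2n : pp.2 ≠ p0 := fun h => h12 (hp1.trans h.symm)
        rw [hYne _ h2n, hX0 pp.2 h2, hX0 pp.1 h1]; ring
      · rw [hYne _ hp1, hX0 pp.1 h1]; ring
    · have hd := hdisj q' hq' q hq hq'q
      have hn1 : pp.1 ≠ p0 := fun h =>
        (Finset.disjoint_left.1 hd h1) (by rw [h]; exact hp0)
      have hn2 : pp.2 ≠ p0 := fun h =>
        (Finset.disjoint_left.1 hd h2) (by rw [h]; exact hp0)
      rw [hYne _ hn1, hYne _ hn2]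
  have hES : ES P s Y ≤ ES P s X := by
    unfold ES
    have hsum : ∑ pp ∈ P.offDiag, s pp.1 pp.2 * X pp.1 * X pp.2 ≤
        ∑ pp ∈ P.offDiag, s pp.1 pp.2 * Y pp.1 * Y pp.2 := by
      refine Finset.sum_le_sum fun pp hpp => ?_
      obtain ⟨h1, h2, _⟩ := Finset.mem_offDiag.1 hpp
      have hs := hsnn pp.1 h1 pp.2 h2
      exact mul_le_mul (mul_le_mul_of_nonneg_left (hYX _ h1) hs) (hYX _ h2)
        (hXnn _ h2) (mul_nonneg hs (hYnn _ h1))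
    linarith
  have hm := hmin Y hYass
  simp only [energy] at hm
  rw [hEL, hEM, hEC] at hm
  have hc := hwL p0 hp0P
  linarith
end
end

section
/- Assume all execution costs are nonnegative (c_p ≥ 0 for all p ∈ P), all savings are nonnegative, w_L > max_{p∈P} c_p, and w_M > w_L + max_{p1∈P} Σ_{p2∈P} s_{p1,p2}. If X : P → {0,1} minimizes the energy formula E, then X is valid (for every query q ∈ Q there is exactly one plan p ∈ P_q with X(p) = 1), and the selected plan set P_e = {p ∈ P : X(p) = 1} has minimal execution cost C(P_e) among all plan sets arising from valid assignments. -/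
open Finset
open scoped Classical

noncomputable section

variable {A Qt : Type*}

lemma sum_offDiag_eq' (T : Finset A) (f : A → A → ℝ) :
    ∑ pp ∈ T.offDiag, f pp.1 pp.2
      = (∑ p1 ∈ T, ∑ p2 ∈ T, f p1 p2) - ∑ p ∈ T, f p p := by
  have h : ∑ pp ∈ T.diag, f pp.1 pp.2 + ∑ pp ∈ T.offDiag, f pp.1 pp.2
      = ∑ pp ∈ T ×ˢ T, f pp.1 pp.2 := by
    rw [← Finset.sum_union (Finset.disjoint_diag_offDiag _), Finset.diag_union_offDiag]
  rw [Finset.sum_product, Finset.sum_diag] at h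
  linarith

lemma sum_mul_update' (T : Finset A) (f X : A → ℝ) {p0 : A} (hp0 : p0 ∈ T) (v : ℝ) :
    ∑ p ∈ T, f p * (Function.update X p0 v p)
      = ∑ p ∈ T, f p * X p + f p0 * (v - X p0) := by
  rw [← Finset.add_sum_erase T (fun p => f p * Function.update X p0 v p) hp0,
      ← Finset.add_sum_erase T (fun p => f p * X p) hp0]
  have h : ∑ p ∈ T.erase p0, f p * Function.update X p0 v p
      = ∑ p ∈ T.erase p0, f p * X p :=
    Finset.sum_congr rfl fun p hp => by
      rw [Function.update_of_ne (Finset.ne_of_mem_erase hp)]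
  rw [h, Function.update_self]; ring

lemma sum_update' (T : Finset A) (X : A → ℝ) {p0 : A} (hp0 : p0 ∈ T) (v : ℝ) :
    ∑ p ∈ T, Function.update X p0 v p = (∑ p ∈ T, X p) + (v - X p0) := by
  have := sum_mul_update' T (fun _ => 1) X hp0 v
  simpa using this

lemma quad_update' (P : Finset A) (s : A → A → ℝ)
    (hsym : ∀ p1 p2, s p1 p2 = s p2 p1) (hsdiag : ∀ p, s p p = 0)
    (X : A → ℝ) {p0 : A} (hp0 : p0 ∈ P) (v : ℝ) :
    ∑ p1 ∈ P, ∑ p2 ∈ P, s p1 p2 * Function.update X p0 v p1 * Function.update X p0 v p2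
      = (∑ p1 ∈ P, ∑ p2 ∈ P, s p1 p2 * X p1 * X p2)
        + 2 * (v - X p0) * ∑ p2 ∈ P, s p0 p2 * X p2 := by
  set Y := Function.update X p0 v with hY
  set d := v - X p0 with hd
  have inner : ∀ p1, ∑ p2 ∈ P, s p1 p2 * Y p1 * Y p2
      = ((∑ p2 ∈ P, s p1 p2 * X p2) + s p1 p0 * d) * Y p1 := by
    intro p1
    have h1 : ∑ p2 ∈ P, s p1 p2 * Y p1 * Y p2 = (∑ p2 ∈ P, s p1 p2 * Y p2) * Y p1 := by
      rw [Finset.sum_mul]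
      exact Finset.sum_congr rfl fun p2 _ => by ring
    rw [h1, sum_mul_update' P (fun p2 => s p1 p2) X hp0 v]
  have step1 : ∑ p1 ∈ P, ∑ p2 ∈ P, s p1 p2 * Y p1 * Y p2
      = ∑ p1 ∈ P, ((∑ p2 ∈ P, s p1 p2 * X p2) + s p1 p0 * d) * X p1
        + ((∑ p2 ∈ P, s p0 p2 * X p2) + s p0 p0 * d) * d := by
    rw [Finset.sum_congr rfl fun p1 _ => inner p1,
      sum_mul_update' P (fun p1 => (∑ p2 ∈ P, s p1 p2 * X p2) + s p1 p0 * d) X hp0 v]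
  have step2 : ∑ p1 ∈ P, ((∑ p2 ∈ P, s p1 p2 * X p2) + s p1 p0 * d) * X p1
      = (∑ p1 ∈ P, ∑ p2 ∈ P, s p1 p2 * X p1 * X p2)
        + d * ∑ p2 ∈ P, s p0 p2 * X p2 := by
    have e1 : ∀ p1 ∈ P, ((∑ p2 ∈ P, s p1 p2 * X p2) + s p1 p0 * d) * X p1
        = (∑ p2 ∈ P, s p1 p2 * X p1 * X p2) + d * (s p0 p1 * X p1) := by
      intro p1 _
      have h2 : (∑ p2 ∈ P, s p1 p2 * X p2) * X p1 = ∑ p2 ∈ P, s p1 p2 * X p1 * X p2 := by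
        rw [Finset.sum_mul]
        exact Finset.sum_congr rfl fun p2 _ => by ring
      rw [add_mul, h2, hsym p1 p0]; ring
    rw [Finset.sum_congr rfl e1, Finset.sum_add_distrib, ← Finset.mul_sum]
  rw [step1, step2, hsdiag p0]; ring

lemma offDiag_XX' (T : Finset A) (X : A → ℝ) (hX01 : ∀ p ∈ T, X p = 0 ∨ X p = 1) :
    ∑ pp ∈ T.offDiag, X pp.1 * X pp.2 = (∑ p ∈ T, X p)^2 - ∑ p ∈ T, X p := by
  rw [sum_offDiag_eq' T (fun a b => X a * X b)]
  have h1 : ∑ p1 ∈ T, ∑ p2 ∈ T, X p1 * X p2 = (∑ p ∈ T, X p)^2 := by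
    rw [sq, Finset.sum_mul_sum]
  have h2 : ∑ p ∈ T, X p * X p = ∑ p ∈ T, X p :=
    Finset.sum_congr rfl fun p hp => by
      rcases hX01 p hp with h | h <;> rw [h] <;> ring
  rw [h1, h2]


lemma energy_closed' (P : Finset A) (Q : Finset Qt) (Pq : Qt → Finset A)
    (c : A → ℝ) (s : A → A → ℝ) (wL wM : ℝ)
    (hPq : ∀ q ∈ Q, Pq q ⊆ P) (hsdiag : ∀ p, s p p = 0)
    (X : A → ℝ) (hX : IsAssignment P X) :
    energy P Q Pq c s wL wM X
      = -(wL * ∑ p ∈ P, X p)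
        + wM * ∑ q ∈ Q, (1/2) * ((∑ p ∈ Pq q, X p)^2 - ∑ p ∈ Pq q, X p)
        + ∑ p ∈ P, c p * X p
        - (1/2) * ∑ p1 ∈ P, ∑ p2 ∈ P, s p1 p2 * X p1 * X p2 := by
  have hEM : ∀ q ∈ Q, (1/2 : ℝ) * ∑ pp ∈ (Pq q).offDiag, X pp.1 * X pp.2
      = (1/2) * ((∑ p ∈ Pq q, X p)^2 - ∑ p ∈ Pq q, X p) := by
    intro q hq
    rw [offDiag_XX' (Pq q) X (fun p hp => hX p (hPq q hq hp))]
  have hES : ∑ pp ∈ P.offDiag, s pp.1 pp.2 * X pp.1 * X pp.2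
      = ∑ p1 ∈ P, ∑ p2 ∈ P, s p1 p2 * X p1 * X p2 := by
    rw [sum_offDiag_eq' P (fun a b => s a b * X a * X b)]
    have h0 : ∑ p ∈ P, s p p * X p * X p = 0 :=
      Finset.sum_eq_zero fun p _ => by rw [hsdiag]; ring
    rw [h0, sub_zero]
  unfold energy EL EM EC ES
  rw [hES, Finset.sum_congr rfl hEM]
  ring

lemma energy_of_valid' (P : Finset A) (Q : Finset Qt) (Pq : Qt → Finset A)
    (c : A → ℝ) (s : A → A → ℝ) (wL wM : ℝ)
    (hP : P = Q.biUnion Pq)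
    (hdisj : ∀ q1 ∈ Q, ∀ q2 ∈ Q, q1 ≠ q2 → Disjoint (Pq q1) (Pq q2))
    (Y : A → ℝ) (hY : IsAssignment P Y) (hv : IsValid Q Pq Y) :
    energy P Q Pq c s wL wM Y
      = -(wL * Q.card) + cost c s (selected P Y) := by
  have hPq : ∀ q ∈ Q, Pq q ⊆ P := fun q hq => by
    rw [hP]; exact Finset.subset_biUnion_of_mem Pq hq
  have hone : ∀ q ∈ Q, ∑ p ∈ Pq q, Y p = 1 := by
    intro q hq
    obtain ⟨p0, ⟨hp0m, hp01⟩, huniq⟩ := hv q hq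
    rw [← Finset.add_sum_erase _ _ hp0m, hp01]
    have h0 : ∑ p ∈ (Pq q).erase p0, Y p = 0 :=
      Finset.sum_eq_zero fun p hp => by
        rcases hY p (hPq q hq (Finset.mem_of_mem_erase hp)) with h | h
        · exact h
        · exact absurd (huniq p ⟨Finset.mem_of_mem_erase hp, h⟩)
            (Finset.ne_of_mem_erase hp)
    rw [h0]; ring
  have hsumP : ∑ p ∈ P, Y p = Q.card := by
    rw [hP, Finset.sum_biUnion (fun q1 h1 q2 h2 hne => hdisj q1 h1 q2 h2 hne),
      Finset.sum_congr rfl hone]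
    simp
  have hEC : ∑ p ∈ P, c p * Y p = ∑ p ∈ selected P Y, c p := by
    rw [selected, Finset.sum_filter]
    refine Finset.sum_congr rfl fun p hp => ?_
    rcases hY p hp with h | h <;> simp [h]
  have hES : ∑ pp ∈ P.offDiag, s pp.1 pp.2 * Y pp.1 * Y pp.2
      = ∑ pp ∈ (selected P Y).offDiag, s pp.1 pp.2 := by
    have hsub : (selected P Y).offDiag ⊆ P.offDiag := by
      intro pp hpp
      rw [Finset.mem_offDiag] at hpp ⊢
      exact ⟨Finset.filter_subset _ _ hpp.1, Finset.filter_subset _ _ hpp.2.1, hpp.2.2⟩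
    have hzero : ∀ pp ∈ P.offDiag, pp ∉ (selected P Y).offDiag →
        s pp.1 pp.2 * Y pp.1 * Y pp.2 = 0 := by
      intro pp hpp hpp'
      rw [Finset.mem_offDiag] at hpp
      by_cases h1 : Y pp.1 = 1
      · by_cases h2 : Y pp.2 = 1
        · exact absurd (Finset.mem_offDiag.mpr
            ⟨Finset.mem_filter.mpr ⟨hpp.1, h1⟩, Finset.mem_filter.mpr ⟨hpp.2.1, h2⟩,
              hpp.2.2⟩) hpp'
        · rcases hY pp.2 hpp.2.1 with h | h
          · rw [h]; ring
          · exact absurd h h2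
      · rcases hY pp.1 hpp.1 with h | h
        · rw [h]; ring
        · exact absurd h h1
    rw [← Finset.sum_subset hsub hzero]
    refine Finset.sum_congr rfl fun pp hpp => ?_
    rw [Finset.mem_offDiag] at hpp
    rw [(Finset.mem_filter.mp hpp.1).2, (Finset.mem_filter.mp hpp.2.1).2]
    ring
  have hEM : ∀ q ∈ Q, (1/2 : ℝ) * ∑ pp ∈ (Pq q).offDiag, Y pp.1 * Y pp.2 = 0 := by
    intro q hq
    rw [offDiag_XX' (Pq q) Y (fun p hp => hY p (hPq q hq hp)), hone q hq]
    norm_num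
  unfold energy EL EM EC ES cost
  rw [hES, hEC, hsumP, Finset.sum_congr rfl hEM, Finset.sum_const]
  simp only [smul_zero]
  ring

/-- any minimizer of the energy formula is a valid assignment whose selected
plan set has minimal execution cost among all plan sets arising from valid assignments. -/
theorem energy_minimizer_valid_and_cost_optimal
(P : Finset A) (Q : Finset Qt) (Pq : Qt → Finset A)
    (c : A → ℝ) (s : A → A → ℝ) (wL wM : ℝ)
    (hP : P = Q.biUnion Pq)
    (hdisj : ∀ q1 ∈ Q, ∀ q2 ∈ Q, q1 ≠ q2 → Disjoint (Pq q1) (Pq q2))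
    (hnonempty : ∀ q ∈ Q, (Pq q).Nonempty)
    (hsym : ∀ p1 p2 : A, s p1 p2 = s p2 p1)
    (hsdiag : ∀ p : A, s p p = 0)
    (hsnn : ∀ p1 ∈ P, ∀ p2 ∈ P, 0 ≤ s p1 p2)
    (hcnn : ∀ p ∈ P, 0 ≤ c p)
    (hwL : ∀ p ∈ P, c p < wL)
    (hwM : ∀ p1 ∈ P, wL + ∑ p2 ∈ P, s p1 p2 < wM)
    (X : A → ℝ) (hX : IsAssignment P X)
    (hmin : ∀ Y : A → ℝ, IsAssignment P Y →
      energy P Q Pq c s wL wM X ≤ energy P Q Pq c s wL wM Y) :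
    IsValid Q Pq X ∧
      ∀ Y : A → ℝ, IsAssignment P Y → IsValid Q Pq Y →
        cost c s (selected P X) ≤ cost c s (selected P Y) := by
  have hPq : ∀ q ∈ Q, Pq q ⊆ P := fun q hq => by
    rw [hP]; exact Finset.subset_biUnion_of_mem Pq hq
  have hXnn : ∀ p ∈ P, 0 ≤ X p := fun p hp => by
    rcases hX p hp with h | h <;> rw [h] <;> norm_num
  have hXle1 : ∀ p ∈ P, X p ≤ 1 := fun p hp => by
    rcases hX p hp with h | h <;> rw [h] <;> norm_num
  -- perturbation formula
  have hpert : ∀ q0 ∈ Q, ∀ p0 ∈ Pq q0, ∀ v : ℝ, (v = 0 ∨ v = 1) →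
      energy P Q Pq c s wL wM (Function.update X p0 v)
        = energy P Q Pq c s wL wM X
          + (v - X p0) * (-wL + c p0 - ∑ p2 ∈ P, s p0 p2 * X p2)
          + wM * ((1/2) * ((((∑ p ∈ Pq q0, X p) + (v - X p0))^2
              - ((∑ p ∈ Pq q0, X p) + (v - X p0)))
              - ((∑ p ∈ Pq q0, X p)^2 - (∑ p ∈ Pq q0, X p)))) := by
    intro q0 hq0 p0 hp0 v hv
    have hp0P : p0 ∈ P := hPq q0 hq0 hp0
    have hYa : IsAssignment P (Function.update X p0 v) := fun p hp => by
      by_cases h : p = p0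
      · subst h; rw [Function.update_self]; exact hv
      · rw [Function.update_of_ne h]; exact hX p hp
    rw [energy_closed' P Q Pq c s wL wM hPq hsdiag _ hYa,
        energy_closed' P Q Pq c s wL wM hPq hsdiag X hX]
    have e1 := sum_update' P X hp0P v
    have e3 := sum_mul_update' P c X hp0P v
    have e4 := quad_update' P s hsym hsdiag X hp0P v
    have e2 : ∑ q ∈ Q, (1/2 : ℝ) * ((∑ p ∈ Pq q, Function.update X p0 v p)^2
          - ∑ p ∈ Pq q, Function.update X p0 v p)
        = (∑ q ∈ Q, (1/2) * ((∑ p ∈ Pq q, X p)^2 - ∑ p ∈ Pq q, X p))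
          + ((1/2) * ((((∑ p ∈ Pq q0, X p) + (v - X p0))^2
              - ((∑ p ∈ Pq q0, X p) + (v - X p0)))
              - ((∑ p ∈ Pq q0, X p)^2 - (∑ p ∈ Pq q0, X p)))) := by
      have herase : ∀ q ∈ Q.erase q0,
          ∑ p ∈ Pq q, Function.update X p0 v p = ∑ p ∈ Pq q, X p := by
        intro q hq
        have hnot : p0 ∉ Pq q :=
          Finset.disjoint_left.mp
            (hdisj q0 hq0 q (Finset.mem_of_mem_erase hq)
              (Ne.symm (Finset.ne_of_mem_erase hq))) hp0
        exact Finset.sum_congr rfl fun p hp =>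
          Function.update_of_ne (by rintro rfl; exact hnot hp) v X
      rw [← Finset.add_sum_erase Q
          (fun q => (1/2 : ℝ) * ((∑ p ∈ Pq q, Function.update X p0 v p)^2
            - ∑ p ∈ Pq q, Function.update X p0 v p)) hq0,
        ← Finset.add_sum_erase Q
          (fun q => (1/2 : ℝ) * ((∑ p ∈ Pq q, X p)^2 - ∑ p ∈ Pq q, X p)) hq0]
      have he : ∑ q ∈ Q.erase q0, (1/2 : ℝ) * ((∑ p ∈ Pq q, Function.update X p0 v p)^2
            - ∑ p ∈ Pq q, Function.update X p0 v p)
          = ∑ q ∈ Q.erase q0, (1/2 : ℝ) * ((∑ p ∈ Pq q, X p)^2 - ∑ p ∈ Pq q, X p) :=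
        Finset.sum_congr rfl fun q hq => by rw [herase q hq]
      rw [he, sum_update' (Pq q0) X hp0 v]
      ring
    rw [e1, e2, e3, e4]
    ring
  -- validity
  have hvalid : IsValid Q Pq X := by
    intro q hq
    have hex : ∃ p, p ∈ Pq q ∧ X p = 1 := by
      by_contra hno
      push_neg at hno
      obtain ⟨p0, hp0⟩ := hnonempty q hq
      have hp0P : p0 ∈ P := hPq q hq hp0
      have hzero : ∀ p ∈ Pq q, X p = 0 := fun p hp =>
        (hX p (hPq q hq hp)).resolve_right (hno p hp)
      have hn : ∑ p ∈ Pq q, X p = 0 := Finset.sum_eq_zero hzero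
      have hx0 : X p0 = 0 := hzero p0 hp0
      have hYa : IsAssignment P (Function.update X p0 1) := fun p hp => by
        by_cases h : p = p0
        · subst h; rw [Function.update_self]; right; rfl
        · rw [Function.update_of_ne h]; exact hX p hp
      have hle := hmin _ hYa
      rw [hpert q hq p0 hp0 1 (Or.inr rfl), hn, hx0] at hle
      have hK : 0 ≤ ∑ p2 ∈ P, s p0 p2 * X p2 :=
        Finset.sum_nonneg fun p2 hp2 =>
          mul_nonneg (hsnn p0 hp0P p2 hp2) (hXnn p2 hp2)
      have hcw := hwL p0 hp0P
      nlinarith [hle, hK, hcw]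
    obtain ⟨p0, hp0m, hp01⟩ := hex
    refine ⟨p0, ⟨hp0m, hp01⟩, fun p1 hp1 => ?_⟩
    by_contra hne
    obtain ⟨hp1m, hp11⟩ := hp1
    have hp0P : p0 ∈ P := hPq q hq hp0m
    have hn2 : (2:ℝ) ≤ ∑ p ∈ Pq q, X p := by
      have h1 : X p1 ≤ ∑ p ∈ (Pq q).erase p0, X p :=
        Finset.single_le_sum
          (fun p hp => hXnn p (hPq q hq (Finset.mem_of_mem_erase hp)))
          (Finset.mem_erase.mpr ⟨hne, hp1m⟩)
      have h2 : X p0 + ∑ p ∈ (Pq q).erase p0, X p = ∑ p ∈ Pq q, X p :=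
        Finset.add_sum_erase _ _ hp0m
      rw [← h2, hp01]
      linarith [hp11 ▸ h1]
    have hYa : IsAssignment P (Function.update X p0 0) := fun p hp => by
      by_cases h : p = p0
      · subst h; rw [Function.update_self]; left; rfl
      · rw [Function.update_of_ne h]; exact hX p hp
    have hle := hmin _ hYa
    rw [hpert q hq p0 hp0m 0 (Or.inl rfl), hp01] at hle
    have hKle : ∑ p2 ∈ P, s p0 p2 * X p2 ≤ ∑ p2 ∈ P, s p0 p2 :=
      Finset.sum_le_sum fun p2 hp2 => by
        have := hsnn p0 hp0P p2 hp2
        nlinarith [hXle1 p2 hp2]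
    have hSnn : 0 ≤ ∑ p2 ∈ P, s p0 p2 :=
      Finset.sum_nonneg fun p2 hp2 => hsnn p0 hp0P p2 hp2
    have hwM0 := hwM p0 hp0P
    have hwMpos : 0 < wM := by
      have := hwL p0 hp0P
      have := hcnn p0 hp0P
      linarith
    have hcp := hcnn p0 hp0P
    nlinarith [hle, hn2, hKle, hwM0, hwMpos, hcp,
      mul_nonneg hwMpos.le (by linarith [hn2] : (0:ℝ) ≤ (∑ p ∈ Pq q, X p) - 2)]
  refine ⟨hvalid, fun Y hYa hYv => ?_⟩
  have hx := energy_of_valid' P Q Pq c s wL wM hP hdisj X hX hvalid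
  have hy := energy_of_valid' P Q Pq c s wL wM hP hdisj Y hYa hYv
  have := hmin Y hYa
  rw [hx, hy] at this
  linarith
end
end

section
/- Assume all execution costs are nonnegative (c_p ≥ 0 for all p ∈ P), all savings are nonnegative, w_L > max_{p∈P} c_p, and w_M > w_L + max_{p1∈P} Σ_{p2∈P} s_{p1,p2}. If X* : P → {0,1} is a valid assignment whose selected plan set P_e* = {p : X*(p) = 1} has minimal execution cost C(P_e*) among all plan sets arising from valid assignments, then X* minimizes the energy formula E over all assignments X : P → {0,1}. -/
open Finset
open scoped Classical

noncomputable section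

variable {A Qt : Type*}

lemma myOffDiag_filter (T : Finset A) (φ : A → Prop) :
    (T.filter φ).offDiag = T.offDiag.filter (fun pp => φ pp.1 ∧ φ pp.2) := by
  ext ⟨a, b⟩
  simp only [Finset.mem_offDiag, Finset.mem_filter]
  tauto

lemma myOffDiag_card_real (T : Finset A) :
    ((T.offDiag.card : ℕ) : ℝ) = (T.card : ℝ) ^ 2 - T.card := by
  rw [Finset.offDiag_card]
  rcases Nat.eq_zero_or_pos T.card with h | h
  · simp [h]
  · rw [Nat.cast_sub (Nat.le_mul_of_pos_left _ h)]
    push_cast; ring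

lemma mySum_indicator (T : Finset A) (X : A → ℝ) (hX : ∀ p ∈ T, X p = 0 ∨ X p = 1)
    (f : A → ℝ) :
    ∑ p ∈ T, f p * X p = ∑ p ∈ T.filter (fun p => X p = 1), f p := by
  rw [Finset.sum_filter]
  refine Finset.sum_congr rfl fun p hp => ?_
  rcases hX p hp with h | h <;> simp [h]

lemma mySum_offDiag_indicator (T : Finset A) (X : A → ℝ)
    (hX : ∀ p ∈ T, X p = 0 ∨ X p = 1) (f : A → A → ℝ) :
    ∑ pp ∈ T.offDiag, f pp.1 pp.2 * X pp.1 * X pp.2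
      = ∑ pp ∈ (T.filter fun p => X p = 1).offDiag, f pp.1 pp.2 := by
  rw [myOffDiag_filter, Finset.sum_filter]
  refine Finset.sum_congr rfl fun pp hpp => ?_
  have h1 := (Finset.mem_offDiag.1 hpp).1
  have h2 := (Finset.mem_offDiag.1 hpp).2.1
  rcases hX _ h1 with h | h <;> rcases hX _ h2 with h' | h' <;> simp [h, h']

lemma mySum_offDiag_erase (S : Finset A) (p : A) (hp : p ∈ S) (s : A → A → ℝ)
    (hsym : ∀ p1 p2 : A, s p1 p2 = s p2 p1) :
    ∑ pp ∈ S.offDiag, s pp.1 pp.2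
      = ∑ pp ∈ (S.erase p).offDiag, s pp.1 pp.2 + 2 * ∑ b ∈ S.erase p, s p b := by
  have hins : S = insert p (S.erase p) := (Finset.insert_erase hp).symm
  have hnotmem : p ∉ S.erase p := Finset.notMem_erase p S
  set t := S.erase p with ht
  have hod : (insert p t).offDiag = t.offDiag ∪ {p} ×ˢ t ∪ t ×ˢ {p} := Finset.offDiag_insert hnotmem
  have hd1 : Disjoint t.offDiag ({p} ×ˢ t) := by
    rw [Finset.disjoint_left]
    rintro ⟨a, b⟩ hab h2
    have ha : a ∈ t := (Finset.mem_offDiag.1 hab).1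
    have hap : a = p := by simpa using (Finset.mem_product.1 h2).1
    exact hnotmem (hap ▸ ha)
  have hd2 : Disjoint (t.offDiag ∪ {p} ×ˢ t) (t ×ˢ {p}) := by
    rw [Finset.disjoint_left]
    rintro ⟨a, b⟩ hab h2
    have hb : b = p := by simpa using (Finset.mem_product.1 h2).2
    rcases Finset.mem_union.1 hab with h | h
    · exact hnotmem (hb ▸ (Finset.mem_offDiag.1 h).2.1)
    · exact hnotmem (hb ▸ (Finset.mem_product.1 h).2)
  calc ∑ pp ∈ S.offDiag, s pp.1 pp.2
      = ∑ pp ∈ (insert p t).offDiag, s pp.1 pp.2 := by rw [← hins]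
    _ = ∑ pp ∈ t.offDiag, s pp.1 pp.2 + ∑ pp ∈ {p} ×ˢ t, s pp.1 pp.2
          + ∑ pp ∈ t ×ˢ {p}, s pp.1 pp.2 := by
        rw [hod, Finset.sum_union hd2, Finset.sum_union hd1]
    _ = ∑ pp ∈ t.offDiag, s pp.1 pp.2 + 2 * ∑ b ∈ t, s p b := by
        rw [Finset.sum_product, Finset.sum_product]
        simp only [Finset.sum_singleton]
        have : ∑ b ∈ t, s b p = ∑ b ∈ t, s p b :=
          Finset.sum_congr rfl fun b _ => hsym b p
        rw [this]; ring

/-- The per-query multiplicity penalty of a plan set. -/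
def Mterm (Q : Finset Qt) (Pq : Qt → Finset A) (S : Finset A) : ℝ :=
  ∑ q ∈ Q, (1 / 2) * ((S ∩ Pq q).offDiag.card : ℝ)

/-- Energy expressed as a function of the selected plan set. -/
def Ehat (Q : Finset Qt) (Pq : Qt → Finset A) (c : A → ℝ) (s : A → A → ℝ)
    (wL wM : ℝ) (S : Finset A) : ℝ :=
  -(wL * S.card) + wM * Mterm Q Pq S + cost c s S

lemma energy_eq_Ehat (P : Finset A) (Q : Finset Qt) (Pq : Qt → Finset A)
    (c : A → ℝ) (s : A → A → ℝ) (wL wM : ℝ)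
    (hP : P = Q.biUnion Pq) (X : A → ℝ) (hX : IsAssignment P X) :
    energy P Q Pq c s wL wM X = Ehat Q Pq c s wL wM (selected P X) := by
  have h1 : ∑ p ∈ P, X p = ((P.filter fun p => X p = 1).card : ℝ) := by
    calc ∑ p ∈ P, X p = ∑ p ∈ P, (1 : ℝ) * X p := by simp
      _ = ∑ p ∈ P.filter (fun p => X p = 1), (1 : ℝ) := mySum_indicator P X hX (fun _ => (1:ℝ))
      _ = ((P.filter fun p => X p = 1).card : ℝ) := by simp
  have h2 : ∀ q ∈ Q, ∑ pp ∈ (Pq q).offDiag, X pp.1 * X pp.2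
      = ((((P.filter fun p => X p = 1) ∩ Pq q)).offDiag.card : ℝ) := by
    intro q hq
    have hsub : Pq q ⊆ P := hP ▸ Finset.subset_biUnion_of_mem Pq hq
    have heq : (Pq q).filter (fun p => X p = 1) = (P.filter fun p => X p = 1) ∩ Pq q := by
      ext a
      simp only [Finset.mem_filter, Finset.mem_inter]
      exact ⟨fun h => ⟨⟨hsub h.1, h.2⟩, h.1⟩, fun h => ⟨h.2, h.1.2⟩⟩
    calc ∑ pp ∈ (Pq q).offDiag, X pp.1 * X pp.2
        = ∑ pp ∈ (Pq q).offDiag, (1 : ℝ) * X pp.1 * X pp.2 := by simp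
      _ = ∑ pp ∈ ((Pq q).filter fun p => X p = 1).offDiag, (1 : ℝ) :=
          mySum_offDiag_indicator (Pq q) X (fun p hp => hX p (hsub hp)) (fun _ _ => (1:ℝ))
      _ = ((((P.filter fun p => X p = 1) ∩ Pq q)).offDiag.card : ℝ) := by rw [heq]; simp
  have h3 : ∑ pp ∈ P.offDiag, s pp.1 pp.2 * X pp.1 * X pp.2
      = ∑ pp ∈ (P.filter fun p => X p = 1).offDiag, s pp.1 pp.2 :=
    mySum_offDiag_indicator P X hX s
  have h4 : ∑ p ∈ P, c p * X p = ∑ p ∈ P.filter (fun p => X p = 1), c p :=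
    mySum_indicator P X hX c
  have hEM : ∑ q ∈ Q, (1 / 2) * ∑ pp ∈ (Pq q).offDiag, X pp.1 * X pp.2
      = ∑ q ∈ Q, (1 / 2) * ((((P.filter fun p => X p = 1) ∩ Pq q)).offDiag.card : ℝ) :=
    Finset.sum_congr rfl fun q hq => by rw [h2 q hq]
  simp only [energy, EL, EM, EC, ES, Ehat, Mterm, cost, selected]
  rw [h1, h3, h4, hEM]
  ring

lemma inter_erase_ne (Q : Finset Qt) (Pq : Qt → Finset A)
    (hdisj : ∀ q1 ∈ Q, ∀ q2 ∈ Q, q1 ≠ q2 → Disjoint (Pq q1) (Pq q2))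
    {q q0 : Qt} (hq : q ∈ Q) (hq0 : q0 ∈ Q) (hne : q ≠ q0) {p : A} (hpq : p ∈ Pq q0)
    (S : Finset A) : (S.erase p) ∩ Pq q = S ∩ Pq q := by
  ext a
  simp only [Finset.mem_inter, Finset.mem_erase]
  constructor
  · rintro ⟨⟨-, h1⟩, h2⟩; exact ⟨h1, h2⟩
  · rintro ⟨h1, h2⟩
    refine ⟨⟨?_, h1⟩, h2⟩
    rintro rfl
    exact (Finset.disjoint_left.1 (hdisj q hq q0 hq0 hne)) h2 hpq

lemma inter_insert_ne (Q : Finset Qt) (Pq : Qt → Finset A)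
    (hdisj : ∀ q1 ∈ Q, ∀ q2 ∈ Q, q1 ≠ q2 → Disjoint (Pq q1) (Pq q2))
    {q q0 : Qt} (hq : q ∈ Q) (hq0 : q0 ∈ Q) (hne : q ≠ q0) {p : A} (hpq : p ∈ Pq q0)
    (S : Finset A) : (insert p S) ∩ Pq q = S ∩ Pq q := by
  ext a
  simp only [Finset.mem_inter, Finset.mem_insert]
  constructor
  · rintro ⟨h1 | h1, h2⟩
    · subst h1; exact absurd hpq (Finset.disjoint_left.1 (hdisj q hq q0 hq0 hne) h2)
    · exact ⟨h1, h2⟩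
  · rintro ⟨h1, h2⟩; exact ⟨Or.inr h1, h2⟩

lemma Mterm_eq_zero (Q : Finset Qt) (Pq : Qt → Finset A) (S : Finset A)
    (h1 : ∀ q ∈ Q, (S ∩ Pq q).card = 1) : Mterm Q Pq S = 0 := by
  unfold Mterm
  refine Finset.sum_eq_zero fun q hq => ?_
  rw [Finset.offDiag_card, h1 q hq]
  norm_num

lemma card_sel (P : Finset A) (Q : Finset Qt) (Pq : Qt → Finset A)
    (hP : P = Q.biUnion Pq)
    (hdisj : ∀ q1 ∈ Q, ∀ q2 ∈ Q, q1 ≠ q2 → Disjoint (Pq q1) (Pq q2))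
    (S : Finset A) (hS : S ⊆ P) (h1 : ∀ q ∈ Q, (S ∩ Pq q).card = 1) :
    S.card = Q.card := by
  classical
  have hSeq : S = Q.biUnion (fun q => S ∩ Pq q) := by
    ext a
    simp only [Finset.mem_biUnion, Finset.mem_inter]
    constructor
    · intro ha
      have := hS ha
      rw [hP, Finset.mem_biUnion] at this
      obtain ⟨q, hq, haq⟩ := this
      exact ⟨q, hq, ha, haq⟩
    · rintro ⟨q, _, ha, -⟩; exact ha
  rw [hSeq, Finset.card_biUnion]
  · rw [Finset.sum_congr rfl h1, Finset.sum_const, smul_eq_mul, mul_one]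
  · intro q1 h1' q2 h2' hne
    exact (hdisj q1 h1' q2 h2' hne).mono Finset.inter_subset_right Finset.inter_subset_right

lemma card_one_of_validq (P : Finset A) (Pq : Qt → Finset A) {q : Qt}
    (hsub : Pq q ⊆ P) (X : A → ℝ) (h : ∃! p, p ∈ Pq q ∧ X p = 1) :
    (selected P X ∩ Pq q).card = 1 := by
  obtain ⟨p, ⟨hpq, hp1⟩, hu⟩ := h
  have : selected P X ∩ Pq q = {p} := by
    ext a
    simp only [selected, Finset.mem_inter, Finset.mem_filter, Finset.mem_singleton]
    constructor
    · rintro ⟨⟨-, ha1⟩, haq⟩; exact hu a ⟨haq, ha1⟩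
    · rintro rfl; exact ⟨⟨hsub hpq, hp1⟩, hpq⟩
  rw [this, Finset.card_singleton]

lemma Ehat_erase (P : Finset A) (Q : Finset Qt) (Pq : Qt → Finset A)
    (c : A → ℝ) (s : A → A → ℝ) (wL wM : ℝ)
    (hdisj : ∀ q1 ∈ Q, ∀ q2 ∈ Q, q1 ≠ q2 → Disjoint (Pq q1) (Pq q2))
    (hsym : ∀ p1 p2 : A, s p1 p2 = s p2 p1)
    (hsnn : ∀ p1 ∈ P, ∀ p2 ∈ P, 0 ≤ s p1 p2)
    (hcnn : ∀ p ∈ P, 0 ≤ c p)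
    (hwL : ∀ p ∈ P, c p < wL)
    (hwM : ∀ p1 ∈ P, wL + ∑ p2 ∈ P, s p1 p2 < wM)
    (S : Finset A) (hS : S ⊆ P) {q0 : Qt} (hq0 : q0 ∈ Q) {p : A}
    (hpS : p ∈ S) (hpq : p ∈ Pq q0) (hn : 2 ≤ (S ∩ Pq q0).card) :
    Ehat Q Pq c s wL wM (S.erase p) ≤ Ehat Q Pq c s wL wM S := by
  have hpP : p ∈ P := hS hpS
  set n := (S ∩ Pq q0).card with hndef
  have hpin : p ∈ S ∩ Pq q0 := Finset.mem_inter.2 ⟨hpS, hpq⟩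
  have hq0int : (S.erase p) ∩ Pq q0 = (S ∩ Pq q0).erase p := by
    ext a
    simp only [Finset.mem_inter, Finset.mem_erase]
    tauto
  -- Mterm
  have hM : Mterm Q Pq (S.erase p) = Mterm Q Pq S - ((n : ℝ) - 1) := by
    unfold Mterm
    have e1 : ∑ q ∈ Q, (1 / 2) * (((S.erase p ∩ Pq q)).offDiag.card : ℝ)
        = (1 / 2) * (((S.erase p ∩ Pq q0)).offDiag.card : ℝ)
          + ∑ q ∈ Q.erase q0, (1 / 2) * (((S.erase p ∩ Pq q)).offDiag.card : ℝ) :=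
      (Finset.add_sum_erase Q _ hq0).symm
    have e2 : ∑ q ∈ Q, (1 / 2) * (((S ∩ Pq q)).offDiag.card : ℝ)
        = (1 / 2) * (((S ∩ Pq q0)).offDiag.card : ℝ)
          + ∑ q ∈ Q.erase q0, (1 / 2) * (((S ∩ Pq q)).offDiag.card : ℝ) :=
      (Finset.add_sum_erase Q _ hq0).symm
    have hrest : ∑ q ∈ Q.erase q0, (1 / 2) * (((S.erase p ∩ Pq q)).offDiag.card : ℝ)
        = ∑ q ∈ Q.erase q0, (1 / 2) * (((S ∩ Pq q)).offDiag.card : ℝ) := by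
      refine Finset.sum_congr rfl fun q hq => ?_
      rw [inter_erase_ne Q Pq hdisj (Finset.mem_of_mem_erase hq) hq0
        (Finset.ne_of_mem_erase hq) hpq]
    have hcard : ((S ∩ Pq q0).erase p).card = n - 1 := Finset.card_erase_of_mem hpin
    have hc1 : (((S ∩ Pq q0).erase p).card : ℝ) = (n : ℝ) - 1 := by
      rw [hcard, Nat.cast_sub (by omega)]; norm_num
    rw [e1, e2, hrest, hq0int, myOffDiag_card_real, myOffDiag_card_real, hc1]
    ring
  -- cost
  have hc : cost c s (S.erase p) = cost c s S - c p + ∑ b ∈ S.erase p, s p b := by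
    unfold cost
    have hsumc : ∑ b ∈ S.erase p, c b + c p = ∑ b ∈ S, c b := Finset.sum_erase_add S c hpS
    have hod := mySum_offDiag_erase S p hpS s hsym
    rw [hod]
    linarith
  -- card
  have hcd : ((S.erase p).card : ℝ) = (S.card : ℝ) - 1 := by
    rw [Finset.card_erase_of_mem hpS, Nat.cast_sub (by
      exact Nat.one_le_iff_ne_zero.2 (Finset.card_ne_zero_of_mem hpS))]
    norm_num
  -- bounds
  have hsle : ∑ b ∈ S.erase p, s p b ≤ ∑ b ∈ P, s p b :=
    Finset.sum_le_sum_of_subset_of_nonneg ((Finset.erase_subset _ _).trans hS)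
      (fun b hb _ => hsnn p hpP b hb)
  have hwM' : wL + ∑ b ∈ P, s p b < wM := hwM p hpP
  have hsnn' : 0 ≤ ∑ b ∈ P, s p b := Finset.sum_nonneg fun b hb => hsnn p hpP b hb
  have hwMpos : 0 < wM := by
    have h0 := hcnn p hpP
    have h2 := hwL p hpP
    linarith
  have hn' : (1 : ℝ) ≤ (n : ℝ) - 1 := by
    have : (2 : ℝ) ≤ (n : ℝ) := by exact_mod_cast hn
    linarith
  have hwMn : wM ≤ wM * ((n : ℝ) - 1) := by nlinarith
  have hcp : 0 ≤ c p := hcnn p hpP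
  unfold Ehat
  rw [hM, hc, hcd]
  nlinarith

lemma Ehat_insert (P : Finset A) (Q : Finset Qt) (Pq : Qt → Finset A)
    (c : A → ℝ) (s : A → A → ℝ) (wL wM : ℝ)
    (hP : P = Q.biUnion Pq)
    (hdisj : ∀ q1 ∈ Q, ∀ q2 ∈ Q, q1 ≠ q2 → Disjoint (Pq q1) (Pq q2))
    (hsym : ∀ p1 p2 : A, s p1 p2 = s p2 p1)
    (hsnn : ∀ p1 ∈ P, ∀ p2 ∈ P, 0 ≤ s p1 p2)
    (hwL : ∀ p ∈ P, c p < wL)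
    (S : Finset A) (hS : S ⊆ P) {q0 : Qt} (hq0 : q0 ∈ Q) {p : A}
    (hpq : p ∈ Pq q0) (hempty : S ∩ Pq q0 = ∅) :
    Ehat Q Pq c s wL wM (insert p S) ≤ Ehat Q Pq c s wL wM S := by
  have hpP : p ∈ P := by
    rw [hP, Finset.mem_biUnion]; exact ⟨q0, hq0, hpq⟩
  have hpS : p ∉ S := by
    intro h
    have : p ∈ S ∩ Pq q0 := Finset.mem_inter.2 ⟨h, hpq⟩
    rw [hempty] at this
    exact absurd this (Finset.notMem_empty p)
  have hq0int : insert p S ∩ Pq q0 = {p} := by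
    ext a
    simp only [Finset.mem_inter, Finset.mem_insert, Finset.mem_singleton]
    constructor
    · rintro ⟨rfl | ha, haq⟩
      · rfl
      · exact absurd (Finset.mem_inter.2 ⟨ha, haq⟩) (by rw [hempty]; exact Finset.notMem_empty a)
    · rintro rfl; exact ⟨Or.inl rfl, hpq⟩
  have hM : Mterm Q Pq (insert p S) = Mterm Q Pq S := by
    unfold Mterm
    have e1 : ∑ q ∈ Q, (1 / 2) * (((insert p S ∩ Pq q)).offDiag.card : ℝ)
        = (1 / 2) * (((insert p S ∩ Pq q0)).offDiag.card : ℝ)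
          + ∑ q ∈ Q.erase q0, (1 / 2) * (((insert p S ∩ Pq q)).offDiag.card : ℝ) :=
      (Finset.add_sum_erase Q _ hq0).symm
    have e2 : ∑ q ∈ Q, (1 / 2) * (((S ∩ Pq q)).offDiag.card : ℝ)
        = (1 / 2) * (((S ∩ Pq q0)).offDiag.card : ℝ)
          + ∑ q ∈ Q.erase q0, (1 / 2) * (((S ∩ Pq q)).offDiag.card : ℝ) :=
      (Finset.add_sum_erase Q _ hq0).symm
    have hrest : ∑ q ∈ Q.erase q0, (1 / 2) * (((insert p S ∩ Pq q)).offDiag.card : ℝ)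
        = ∑ q ∈ Q.erase q0, (1 / 2) * (((S ∩ Pq q)).offDiag.card : ℝ) := by
      refine Finset.sum_congr rfl fun q hq => ?_
      rw [inter_insert_ne Q Pq hdisj (Finset.mem_of_mem_erase hq) hq0
        (Finset.ne_of_mem_erase hq) hpq]
    rw [e1, e2, hrest, hq0int, hempty]
    simp [Finset.offDiag_singleton]
  have hc : cost c s (insert p S) = cost c s S + c p - ∑ b ∈ S, s p b := by
    unfold cost
    have h1 : ∑ b ∈ insert p S, c b = c p + ∑ b ∈ S, c b := Finset.sum_insert hpS
    have h2 : ∑ pp ∈ (insert p S).offDiag, s pp.1 pp.2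
        = ∑ pp ∈ ((insert p S).erase p).offDiag, s pp.1 pp.2
          + 2 * ∑ b ∈ (insert p S).erase p, s p b :=
      mySum_offDiag_erase (insert p S) p (Finset.mem_insert_self p S) s hsym
    rw [Finset.erase_insert hpS] at h2
    rw [h1, h2]
    ring
  have hcd : ((insert p S).card : ℝ) = (S.card : ℝ) + 1 := by
    rw [Finset.card_insert_of_notMem hpS]; push_cast; ring
  have hsnn' : 0 ≤ ∑ b ∈ S, s p b := Finset.sum_nonneg fun b hb => hsnn p hpP b (hS hb)
  have hcp : c p < wL := hwL p hpP
  unfold Ehat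
  rw [hM, hc, hcd]
  linarith

/-- Distance of a plan set from being a valid selection. -/
def mu (Q : Finset Qt) (Pq : Qt → Finset A) (S : Finset A) : ℕ :=
  ∑ q ∈ Q, (if (S ∩ Pq q).card = 0 then 1 else (S ∩ Pq q).card - 1)

lemma inter_insert_self (Pq : Qt → Finset A) {q0 : Qt} {p : A} (S : Finset A)
    (hpq : p ∈ Pq q0) (hempty : S ∩ Pq q0 = ∅) : insert p S ∩ Pq q0 = {p} := by
  ext a
  simp only [Finset.mem_inter, Finset.mem_insert, Finset.mem_singleton]
  constructor
  · rintro ⟨rfl | ha, haq⟩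
    · rfl
    · exact absurd (Finset.mem_inter.2 ⟨ha, haq⟩) (by rw [hempty]; exact Finset.notMem_empty a)
  · rintro rfl; exact ⟨Or.inl rfl, hpq⟩

lemma mu_insert (Q : Finset Qt) (Pq : Qt → Finset A)
    (hdisj : ∀ q1 ∈ Q, ∀ q2 ∈ Q, q1 ≠ q2 → Disjoint (Pq q1) (Pq q2))
    {q0 : Qt} (hq0 : q0 ∈ Q) {p : A} (hpq : p ∈ Pq q0) (S : Finset A)
    (hempty : S ∩ Pq q0 = ∅) :
    mu Q Pq (insert p S) + 1 = mu Q Pq S := by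
  unfold mu
  have e1 : ∑ q ∈ Q, (if ((insert p S) ∩ Pq q).card = 0 then 1 else ((insert p S) ∩ Pq q).card - 1)
      = (if ((insert p S) ∩ Pq q0).card = 0 then 1 else ((insert p S) ∩ Pq q0).card - 1)
        + ∑ q ∈ Q.erase q0, (if ((insert p S) ∩ Pq q).card = 0 then 1 else ((insert p S) ∩ Pq q).card - 1) :=
    (Finset.add_sum_erase Q _ hq0).symm
  have e2 : ∑ q ∈ Q, (if (S ∩ Pq q).card = 0 then 1 else (S ∩ Pq q).card - 1)
      = (if (S ∩ Pq q0).card = 0 then 1 else (S ∩ Pq q0).card - 1)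
        + ∑ q ∈ Q.erase q0, (if (S ∩ Pq q).card = 0 then 1 else (S ∩ Pq q).card - 1) :=
    (Finset.add_sum_erase Q _ hq0).symm
  have hrest : ∑ q ∈ Q.erase q0, (if ((insert p S) ∩ Pq q).card = 0 then 1 else ((insert p S) ∩ Pq q).card - 1)
      = ∑ q ∈ Q.erase q0, (if (S ∩ Pq q).card = 0 then 1 else (S ∩ Pq q).card - 1) := by
    refine Finset.sum_congr rfl fun q hq => ?_
    rw [inter_insert_ne Q Pq hdisj (Finset.mem_of_mem_erase hq) hq0
      (Finset.ne_of_mem_erase hq) hpq]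
  rw [e1, e2, hrest, inter_insert_self Pq S hpq hempty, hempty]
  simp
  omega

lemma mu_erase (Q : Finset Qt) (Pq : Qt → Finset A)
    (hdisj : ∀ q1 ∈ Q, ∀ q2 ∈ Q, q1 ≠ q2 → Disjoint (Pq q1) (Pq q2))
    {q0 : Qt} (hq0 : q0 ∈ Q) {p : A} (hpq : p ∈ Pq q0) (S : Finset A)
    (hpS : p ∈ S) (hge : 2 ≤ (S ∩ Pq q0).card) :
    mu Q Pq (S.erase p) + 1 = mu Q Pq S := by
  unfold mu
  have e1 : ∑ q ∈ Q, (if ((S.erase p) ∩ Pq q).card = 0 then 1 else ((S.erase p) ∩ Pq q).card - 1)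
      = (if ((S.erase p) ∩ Pq q0).card = 0 then 1 else ((S.erase p) ∩ Pq q0).card - 1)
        + ∑ q ∈ Q.erase q0, (if ((S.erase p) ∩ Pq q).card = 0 then 1 else ((S.erase p) ∩ Pq q).card - 1) :=
    (Finset.add_sum_erase Q _ hq0).symm
  have e2 : ∑ q ∈ Q, (if (S ∩ Pq q).card = 0 then 1 else (S ∩ Pq q).card - 1)
      = (if (S ∩ Pq q0).card = 0 then 1 else (S ∩ Pq q0).card - 1)
        + ∑ q ∈ Q.erase q0, (if (S ∩ Pq q).card = 0 then 1 else (S ∩ Pq q).card - 1) :=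
    (Finset.add_sum_erase Q _ hq0).symm
  have hrest : ∑ q ∈ Q.erase q0, (if ((S.erase p) ∩ Pq q).card = 0 then 1 else ((S.erase p) ∩ Pq q).card - 1)
      = ∑ q ∈ Q.erase q0, (if (S ∩ Pq q).card = 0 then 1 else (S ∩ Pq q).card - 1) := by
    refine Finset.sum_congr rfl fun q hq => ?_
    rw [inter_erase_ne Q Pq hdisj (Finset.mem_of_mem_erase hq) hq0
      (Finset.ne_of_mem_erase hq) hpq]
  have hq0int : (S.erase p) ∩ Pq q0 = (S ∩ Pq q0).erase p := by
    ext a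
    simp only [Finset.mem_inter, Finset.mem_erase]
    tauto
  have hcard : ((S ∩ Pq q0).erase p).card = (S ∩ Pq q0).card - 1 :=
    Finset.card_erase_of_mem (Finset.mem_inter.2 ⟨hpS, hpq⟩)
  rw [e1, e2, hrest, hq0int, hcard]
  have h2 := hge
  split_ifs <;> omega

/-- a valid assignment whose selected plan set has minimal execution cost among
valid assignments minimizes the energy formula over all assignments. -/
theorem cost_optimal_valid_assignment_minimizes_energy
(P : Finset A) (Q : Finset Qt) (Pq : Qt → Finset A)
    (c : A → ℝ) (s : A → A → ℝ) (wL wM : ℝ)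
    (hP : P = Q.biUnion Pq)
    (hdisj : ∀ q1 ∈ Q, ∀ q2 ∈ Q, q1 ≠ q2 → Disjoint (Pq q1) (Pq q2))
    (hnonempty : ∀ q ∈ Q, (Pq q).Nonempty)
    (hsym : ∀ p1 p2 : A, s p1 p2 = s p2 p1)
    (hsdiag : ∀ p : A, s p p = 0)
    (hsnn : ∀ p1 ∈ P, ∀ p2 ∈ P, 0 ≤ s p1 p2)
    (hcnn : ∀ p ∈ P, 0 ≤ c p)
    (hwL : ∀ p ∈ P, c p < wL)
    (hwM : ∀ p1 ∈ P, wL + ∑ p2 ∈ P, s p1 p2 < wM)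
    (Xs : A → ℝ) (hXs : IsAssignment P Xs) (hXsValid : IsValid Q Pq Xs)
    (hopt : ∀ Y : A → ℝ, IsAssignment P Y → IsValid Q Pq Y →
      cost c s (selected P Xs) ≤ cost c s (selected P Y)) :
    ∀ Y : A → ℝ, IsAssignment P Y →
      energy P Q Pq c s wL wM Xs ≤ energy P Q Pq c s wL wM Y := by
  intro Y hY
  have hEXs : energy P Q Pq c s wL wM Xs = Ehat Q Pq c s wL wM (selected P Xs) :=
    energy_eq_Ehat P Q Pq c s wL wM hP Xs hXs
  have hEY : energy P Q Pq c s wL wM Y = Ehat Q Pq c s wL wM (selected P Y) :=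
    energy_eq_Ehat P Q Pq c s wL wM hP Y hY
  have hsubq : ∀ q ∈ Q, Pq q ⊆ P := fun q hq => hP ▸ Finset.subset_biUnion_of_mem Pq hq
  have hXscard : ∀ q ∈ Q, (selected P Xs ∩ Pq q).card = 1 :=
    fun q hq => card_one_of_validq P Pq (hsubq q hq) Xs (hXsValid q hq)
  have hXsEhat : Ehat Q Pq c s wL wM (selected P Xs)
      = -(wL * Q.card) + cost c s (selected P Xs) := by
    unfold Ehat
    rw [Mterm_eq_zero Q Pq _ hXscard,
      card_sel P Q Pq hP hdisj (selected P Xs)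
        (show selected P Xs ⊆ P from Finset.filter_subset _ _) hXscard]
    ring
  have key : ∀ n : ℕ, ∀ S : Finset A, S ⊆ P → mu Q Pq S = n →
      energy P Q Pq c s wL wM Xs ≤ Ehat Q Pq c s wL wM S := by
    intro n
    induction n using Nat.strong_induction_on with
    | _ n ih =>
      intro S hS hmu
      by_cases hall : ∀ q ∈ Q, (S ∩ Pq q).card = 1
      · -- base case: S corresponds to a valid assignment
        have hZass : IsAssignment P (fun a => if a ∈ S then (1 : ℝ) else 0) := by
          intro p _
          by_cases h : p ∈ S <;> simp [h]
        have hselZ : selected P (fun a => if a ∈ S then (1 : ℝ) else 0) = S := by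
          ext a
          simp only [selected, Finset.mem_filter]
          constructor
          · rintro ⟨-, h⟩
            by_contra hns
            rw [if_neg hns] at h; norm_num at h
          · intro h; exact ⟨hS h, by rw [if_pos h]⟩
        have hZvalid : IsValid Q Pq (fun a => if a ∈ S then (1 : ℝ) else 0) := by
          intro q hq
          obtain ⟨a, ha⟩ := Finset.card_eq_one.1 (hall q hq)
          have haS : a ∈ S ∩ Pq q := ha ▸ Finset.mem_singleton_self a
          refine ⟨a, ⟨(Finset.mem_inter.1 haS).2, ?_⟩, ?_⟩
          · show (if a ∈ S then (1 : ℝ) else 0) = 1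
            rw [if_pos (Finset.mem_inter.1 haS).1]
          · rintro b ⟨hbq, hb1⟩
            have hb1' : (if b ∈ S then (1 : ℝ) else 0) = 1 := hb1
            have hbS : b ∈ S := by
              by_contra hns
              rw [if_neg hns] at hb1'; norm_num at hb1'
            have : b ∈ S ∩ Pq q := Finset.mem_inter.2 ⟨hbS, hbq⟩
            rw [ha, Finset.mem_singleton] at this
            exact this
        have hcl : cost c s (selected P Xs) ≤ cost c s S := by
          have := hopt _ hZass hZvalid
          rwa [hselZ] at this
        have hSEhat : Ehat Q Pq c s wL wM S = -(wL * Q.card) + cost c s S := by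
          unfold Ehat
          rw [Mterm_eq_zero Q Pq S hall, card_sel P Q Pq hP hdisj S hS hall]
          ring
        rw [hEXs, hXsEhat, hSEhat]
        linarith
      · push_neg at hall
        obtain ⟨q0, hq0, hq0ne⟩ := hall
        rcases Nat.lt_or_ge (S ∩ Pq q0).card 2 with hlt | hge
        · -- the query q0 has no selected plan: insert one
          have hempty : S ∩ Pq q0 = ∅ := Finset.card_eq_zero.1 (by omega)
          obtain ⟨p, hp⟩ := hnonempty q0 hq0
          have hS' : insert p S ⊆ P := Finset.insert_subset ((hsubq q0 hq0) hp) hS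
          have hmu' : mu Q Pq (insert p S) + 1 = n :=
            hmu ▸ mu_insert Q Pq hdisj hq0 hp S hempty
          refine le_trans (ih _ (by omega) (insert p S) hS' rfl) ?_
          exact Ehat_insert P Q Pq c s wL wM hP hdisj hsym hsnn hwL S hS hq0 hp hempty
        · -- the query q0 has at least two selected plans: erase one
          obtain ⟨p, hp⟩ := Finset.card_pos.1 (by omega : 0 < (S ∩ Pq q0).card)
          have hpS : p ∈ S := (Finset.mem_inter.1 hp).1
          have hpq : p ∈ Pq q0 := (Finset.mem_inter.1 hp).2
          have hS' : S.erase p ⊆ P := (Finset.erase_subset _ _).trans hS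
          have hmu' : mu Q Pq (S.erase p) + 1 = n :=
            hmu ▸ mu_erase Q Pq hdisj hq0 hpq S hpS hge
          refine le_trans (ih _ (by omega) (S.erase p) hS' rfl) ?_
          exact Ehat_erase P Q Pq c s wL wM hdisj hsym hsnn hcnn hwL hwM S hS hq0 hpS hpq hge
  rw [hEY]
  exact key (mu Q Pq (selected P Y)) (selected P Y) (Finset.filter_subset _ _) rfl
end
end

section
/- If X : P → {0,1} is a valid assignment with selected plan set P_e = {p ∈ P : X(p) = 1}, then the energy formula satisfies E(X) = -w_L·|Q| + C(P_e), i.e., on valid assignments the energy equals the execution cost of the selected plans up to the constant additive offset -w_L·|Q|. -/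
open Finset
open scoped Classical

noncomputable section

variable {A Qt : Type*}

/-- on a valid assignment `X` with selected plan set `P_e`, the energy formula
satisfies `E(X) = -w_L·|Q| + C(P_e)`. -/
theorem energy_eq_cost_on_valid_assignments
(P : Finset A) (Q : Finset Qt) (Pq : Qt → Finset A)
    (c : A → ℝ) (s : A → A → ℝ) (wL wM : ℝ)
    (hP : P = Q.biUnion Pq)
    (hdisj : ∀ q1 ∈ Q, ∀ q2 ∈ Q, q1 ≠ q2 → Disjoint (Pq q1) (Pq q2))
    (hnonempty : ∀ q ∈ Q, (Pq q).Nonempty)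
    (hsym : ∀ p1 p2 : A, s p1 p2 = s p2 p1)
    (hsdiag : ∀ p : A, s p p = 0)
    (hsnn : ∀ p1 ∈ P, ∀ p2 ∈ P, 0 ≤ s p1 p2)
    (X : A → ℝ) (hX : IsAssignment P X) (hValid : IsValid Q Pq X) :
    energy P Q Pq c s wL wM X = -wL * (Q.card : ℝ) + cost c s (selected P X) := by
  set Pe := selected P X with hPe
  -- singleton filters per query
  have hfilter : ∀ q ∈ Q, ∃ p, (Pq q).filter (fun p => X p = 1) = {p} := by
    intro q hq
    obtain ⟨p, hp, hup⟩ := hValid q hq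
    refine ⟨p, ?_⟩
    rw [Finset.eq_singleton_iff_unique_mem]
    constructor
    · simp [Finset.mem_filter, hp.1, hp.2]
    · intro x hx
      rw [Finset.mem_filter] at hx
      exact hup x hx
  -- E_L : sum of X over P equals card Q
  have hEL : (∑ p ∈ P, X p) = (Q.card : ℝ) := by
    have h1 : (∑ p ∈ P, X p) = ∑ p ∈ Pe, X p := by
      rw [hPe, selected, Finset.sum_filter]
      refine Finset.sum_congr rfl fun p hp => ?_
      rcases hX p hp with h | h <;> simp [h]
    have h2 : (∑ p ∈ Pe, X p) = Pe.card := by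
      rw [Finset.card_eq_sum_ones, Nat.cast_sum]
      refine Finset.sum_congr rfl fun p hp => ?_
      rw [hPe, selected, Finset.mem_filter] at hp
      simp [hp.2]
    have h3 : Pe = Q.biUnion (fun q => (Pq q).filter (fun p => X p = 1)) := by
      rw [hPe, selected, hP, Finset.filter_biUnion]
    have h4 : Pe.card = Q.card := by
      rw [h3, Finset.card_biUnion]
      · rw [Finset.card_eq_sum_ones]
        refine Finset.sum_congr rfl fun q hq => ?_
        obtain ⟨p, hp⟩ := hfilter q hq
        rw [hp, Finset.card_singleton]
      · intro q1 h1 q2 h2 hne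
        exact Finset.disjoint_filter_filter (hdisj q1 h1 q2 h2 hne)
    rw [h1, h2, h4]
  -- E_M = 0
  have hEM : EM Q Pq X = 0 := by
    unfold EM
    refine Finset.sum_eq_zero fun q hq => ?_
    rw [mul_eq_zero]; right
    refine Finset.sum_eq_zero fun pp hpp => ?_
    rw [Finset.mem_offDiag] at hpp
    obtain ⟨h1, h2, hne⟩ := hpp
    obtain ⟨p, hp⟩ := hfilter q hq
    by_contra hcon
    have hx1 : X pp.1 = 1 := by
      have := hX pp.1 (by rw [hP]; exact Finset.mem_biUnion.mpr ⟨q, hq, h1⟩)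
      rcases this with h | h
      · exact absurd (by rw [h]; ring) hcon
      · exact h
    have hx2 : X pp.2 = 1 := by
      have := hX pp.2 (by rw [hP]; exact Finset.mem_biUnion.mpr ⟨q, hq, h2⟩)
      rcases this with h | h
      · exact absurd (by rw [h]; ring) hcon
      · exact h
    have m1 : pp.1 ∈ ({p} : Finset A) := by
      rw [← hp, Finset.mem_filter]; exact ⟨h1, hx1⟩
    have m2 : pp.2 ∈ ({p} : Finset A) := by
      rw [← hp, Finset.mem_filter]; exact ⟨h2, hx2⟩
    rw [Finset.mem_singleton] at m1 m2
    exact hne (m1.trans m2.symm)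
  -- E_C
  have hEC : EC P c X = ∑ p ∈ Pe, c p := by
    rw [hPe, selected, Finset.sum_filter, EC]
    refine Finset.sum_congr rfl fun p hp => ?_
    rcases hX p hp with h | h <;> simp [h]
  -- E_S
  have hES : (∑ pp ∈ P.offDiag, s pp.1 pp.2 * X pp.1 * X pp.2)
      = ∑ pp ∈ Pe.offDiag, s pp.1 pp.2 := by
    have hoff : Pe.offDiag = P.offDiag.filter (fun pp => X pp.1 = 1 ∧ X pp.2 = 1) := by
      ext pp
      simp only [hPe, selected, Finset.mem_offDiag, Finset.mem_filter]
      tauto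
    rw [hoff, Finset.sum_filter]
    refine Finset.sum_congr rfl fun pp hpp => ?_
    rw [Finset.mem_offDiag] at hpp
    rcases hX pp.1 hpp.1 with h1 | h1 <;> rcases hX pp.2 hpp.2.1 with h2 | h2 <;>
      simp [h1, h2]
  rw [energy, EL, ES, hEL, hEM, hEC, hES, cost]
  ring
end
end

section
/- Assume all execution costs are nonnegative (c_p ≥ 0 for all p ∈ P), all savings are nonnegative, w_L > max_{p∈P} c_p, and w_M > w_L + max_{p1∈P} Σ_{p2∈P} s_{p1,p2}. Then the minimum of the energy formula E over all assignments X : P → {0,1} equals -w_L·|Q| plus the minimum of the execution cost C(P_e) over all plan sets P_e arising from valid assignments. -/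
open Finset
open scoped Classical

noncomputable section

variable {A Qt : Type*}

namespace MQOAux

variable {A Qt : Type*}

/-- indicator function of a finset -/
def ind (S : Finset A) : A → ℝ := fun p => if p ∈ S then 1 else 0

lemma ind_mul_ind (S : Finset A) (a b : A) :
    ind S a * ind S b = if a ∈ S ∧ b ∈ S then (1:ℝ) else 0 := by
  by_cases h1 : a ∈ S <;> by_cases h2 : b ∈ S <;> simp [ind, h1, h2]

lemma ind_eq_one_iff {S : Finset A} {a : A} : ind S a = 1 ↔ a ∈ S := by
  by_cases h : a ∈ S <;> simp [ind, h]

def F (Q : Finset Qt) (Pq : Qt → Finset A) (c : A → ℝ) (s : A → A → ℝ)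
    (wL wM : ℝ) (S : Finset A) : ℝ :=
  -wL * S.card + wM * ∑ q ∈ Q, ((S ∩ Pq q).offDiag.card : ℝ) / 2
    + ∑ p ∈ S, c p - (1 / 2) * ∑ pp ∈ S.offDiag, s pp.1 pp.2

lemma offDiag_insert_card {B : Finset A} {p : A} (hp : p ∉ B) :
    (insert p B).offDiag.card = B.offDiag.card + 2 * B.card := by
  have d1 : Disjoint ({p} ×ˢ B) (B ×ˢ {p}) := by
    rw [Finset.disjoint_left]
    rintro ⟨a, b⟩ h1 h2
    simp only [Finset.mem_product, Finset.mem_singleton] at h1 h2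
    exact hp (h1.1 ▸ h2.1)
  have d2 : Disjoint (B.offDiag ∪ {p} ×ˢ B) (B ×ˢ {p}) := by
    rw [Finset.disjoint_left]
    rintro ⟨a, b⟩ h1 h2
    simp only [Finset.mem_union, Finset.mem_product, Finset.mem_singleton,
      Finset.mem_offDiag] at h1 h2
    rcases h1 with h1 | h1
    · exact hp (h2.2 ▸ h1.2.1)
    · exact hp (h2.2 ▸ h1.2)
  have d3 : Disjoint B.offDiag ({p} ×ˢ B) := by
    rw [Finset.disjoint_left]
    rintro ⟨a, b⟩ h1 h2
    simp only [Finset.mem_product, Finset.mem_singleton, Finset.mem_offDiag] at h1 h2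
    exact hp (h2.1 ▸ h1.1)
  rw [Finset.offDiag_insert (has := hp), Finset.card_union_of_disjoint d2,
    Finset.card_union_of_disjoint d3]
  simp [Finset.card_product]
  ring

lemma offDiag_insert_sum {B : Finset A} {p : A} (hp : p ∉ B)
    (s : A → A → ℝ) (hsym : ∀ p1 p2, s p1 p2 = s p2 p1) :
    ∑ pp ∈ (insert p B).offDiag, s pp.1 pp.2
      = ∑ pp ∈ B.offDiag, s pp.1 pp.2 + 2 * ∑ x ∈ B, s p x := by
  have d1 : Disjoint ({p} ×ˢ B) (B ×ˢ {p}) := by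
    rw [Finset.disjoint_left]
    rintro ⟨a, b⟩ h1 h2
    simp only [Finset.mem_product, Finset.mem_singleton] at h1 h2
    exact hp (h1.1 ▸ h2.1)
  have d2 : Disjoint (B.offDiag ∪ {p} ×ˢ B) (B ×ˢ {p}) := by
    rw [Finset.disjoint_left]
    rintro ⟨a, b⟩ h1 h2
    simp only [Finset.mem_union, Finset.mem_product, Finset.mem_singleton,
      Finset.mem_offDiag] at h1 h2
    rcases h1 with h1 | h1
    · exact hp (h2.2 ▸ h1.2.1)
    · exact hp (h2.2 ▸ h1.2)
  have d3 : Disjoint B.offDiag ({p} ×ˢ B) := by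
    rw [Finset.disjoint_left]
    rintro ⟨a, b⟩ h1 h2
    simp only [Finset.mem_product, Finset.mem_singleton, Finset.mem_offDiag] at h1 h2
    exact hp (h2.1 ▸ h1.1)
  rw [Finset.offDiag_insert (has := hp), Finset.sum_union d2, Finset.sum_union d3]
  have e1 : ∑ pp ∈ {p} ×ˢ B, s pp.1 pp.2 = ∑ x ∈ B, s p x := by
    rw [Finset.sum_product]; simp
  have e2 : ∑ pp ∈ B ×ˢ {p}, s pp.1 pp.2 = ∑ x ∈ B, s p x := by
    rw [Finset.sum_product]
    simp only [Finset.sum_singleton]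
    exact Finset.sum_congr rfl fun x _ => hsym x p
  rw [e1, e2]; ring


lemma energy_ind (P : Finset A) (Q : Finset Qt) (Pq : Qt → Finset A)
    (c : A → ℝ) (s : A → A → ℝ) (wL wM : ℝ) {S : Finset A} (hS : S ⊆ P) :
    energy P Q Pq c s wL wM (ind S) = F Q Pq c s wL wM S := by
  have hEL : EL P (ind S) = -(S.card : ℝ) := by
    unfold EL ind
    rw [Finset.sum_ite_mem, Finset.inter_eq_right.mpr hS]
    simp
  have hEM : EM Q Pq (ind S) = ∑ q ∈ Q, ((S ∩ Pq q).offDiag.card : ℝ) / 2 := by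
    unfold EM
    refine Finset.sum_congr rfl fun q hq => ?_
    have h1 : ∀ pp ∈ (Pq q).offDiag, ind S pp.1 * ind S pp.2
        = if pp.1 ∈ S ∧ pp.2 ∈ S then (1:ℝ) else 0 := fun pp _ => ind_mul_ind ..
    rw [Finset.sum_congr rfl h1, Finset.sum_boole]
    have h2 : (Pq q).offDiag.filter (fun pp => pp.1 ∈ S ∧ pp.2 ∈ S) = (S ∩ Pq q).offDiag := by
      ext ⟨a, b⟩
      simp only [Finset.mem_filter, Finset.mem_offDiag, Finset.mem_inter]
      tauto
    rw [h2]; ring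
  have hEC : EC P c (ind S) = ∑ p ∈ S, c p := by
    unfold EC ind
    simp only [mul_ite, mul_one, mul_zero]
    rw [Finset.sum_ite_mem, Finset.inter_eq_right.mpr hS]
  have hES : ES P s (ind S) = -((1/2) * ∑ pp ∈ S.offDiag, s pp.1 pp.2) := by
    unfold ES
    congr 2
    have h1 : ∀ pp ∈ P.offDiag, s pp.1 pp.2 * ind S pp.1 * ind S pp.2
        = if pp.1 ∈ S ∧ pp.2 ∈ S then s pp.1 pp.2 else 0 := by
      intro pp _
      rw [mul_assoc, ind_mul_ind]
      by_cases h : pp.1 ∈ S ∧ pp.2 ∈ S <;> simp [h]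
    have h2 : P.offDiag.filter (fun pp => pp.1 ∈ S ∧ pp.2 ∈ S) = S.offDiag := by
      ext ⟨a, b⟩
      simp only [Finset.mem_filter, Finset.mem_offDiag]
      exact ⟨fun h => ⟨h.2.1, h.2.2, h.1.2.2⟩, fun h => ⟨⟨hS h.1, hS h.2.1, h.2.2⟩, h.1, h.2.1⟩⟩
    rw [Finset.sum_congr rfl h1, ← Finset.sum_filter, h2]
  unfold energy F
  rw [hEL, hEM, hEC, hES]
  ring

lemma energy_congr (P : Finset A) (Q : Finset Qt) (Pq : Qt → Finset A)
    (c : A → ℝ) (s : A → A → ℝ) (wL wM : ℝ) {X Y : A → ℝ}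
    (hPq : ∀ q ∈ Q, Pq q ⊆ P) (h : ∀ p ∈ P, X p = Y p) :
    energy P Q Pq c s wL wM X = energy P Q Pq c s wL wM Y := by
  have hEL : EL P X = EL P Y := by
    unfold EL; rw [Finset.sum_congr rfl h]
  have hEM : EM Q Pq X = EM Q Pq Y := by
    unfold EM
    refine Finset.sum_congr rfl fun q hq => ?_
    congr 1
    refine Finset.sum_congr rfl fun pp hpp => ?_
    obtain ⟨h1, h2, _⟩ := Finset.mem_offDiag.mp hpp
    rw [h _ (hPq q hq h1), h _ (hPq q hq h2)]
  have hEC : EC P c X = EC P c Y := by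
    unfold EC
    exact Finset.sum_congr rfl fun p hp => by rw [h p hp]
  have hES : ES P s X = ES P s Y := by
    unfold ES
    congr 1
    congr 1
    refine Finset.sum_congr rfl fun pp hpp => ?_
    obtain ⟨h1, h2, _⟩ := Finset.mem_offDiag.mp hpp
    rw [h _ h1, h _ h2]
  unfold energy
  rw [hEL, hEM, hEC, hES]

lemma F_insert (Q : Finset Qt) (Pq : Qt → Finset A) (c : A → ℝ) (s : A → A → ℝ)
    (wL wM : ℝ) (hdisj : ∀ q1 ∈ Q, ∀ q2 ∈ Q, q1 ≠ q2 → Disjoint (Pq q1) (Pq q2))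
    (hsym : ∀ p1 p2, s p1 p2 = s p2 p1)
    {T : Finset A} {p : A} {q0 : Qt} (hq0 : q0 ∈ Q) (hp : p ∈ Pq q0) (hpT : p ∉ T) :
    F Q Pq c s wL wM (insert p T)
      = F Q Pq c s wL wM T - wL + wM * ((T ∩ Pq q0).card : ℝ) + c p - ∑ x ∈ T, s p x := by
  have hcard : ((insert p T).card : ℝ) = (T.card : ℝ) + 1 := by
    rw [Finset.card_insert_of_notMem hpT]; push_cast; ring
  have hc : ∑ x ∈ insert p T, c x = c p + ∑ x ∈ T, c x := Finset.sum_insert hpT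
  have hs : ∑ pp ∈ (insert p T).offDiag, s pp.1 pp.2
      = ∑ pp ∈ T.offDiag, s pp.1 pp.2 + 2 * ∑ x ∈ T, s p x :=
    offDiag_insert_sum hpT s hsym
  have hEM : ∑ q ∈ Q, ((insert p T ∩ Pq q).offDiag.card : ℝ) / 2
      = ∑ q ∈ Q, ((T ∩ Pq q).offDiag.card : ℝ) / 2 + ((T ∩ Pq q0).card : ℝ) := by
    rw [← Finset.add_sum_erase _ _ hq0, ← Finset.add_sum_erase _ (fun q => ((T ∩ Pq q).offDiag.card : ℝ) / 2) hq0]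
    have hrest : ∑ q ∈ Q.erase q0, ((insert p T ∩ Pq q).offDiag.card : ℝ) / 2
        = ∑ q ∈ Q.erase q0, ((T ∩ Pq q).offDiag.card : ℝ) / 2 := by
      refine Finset.sum_congr rfl fun q hq => ?_
      have hq' : q ∈ Q := Finset.mem_of_mem_erase hq
      have hne : q0 ≠ q := fun e => (Finset.ne_of_mem_erase hq) e.symm
      have hpnot : p ∉ Pq q := fun hmem =>
        (Finset.disjoint_left.mp (hdisj q0 hq0 q hq' hne)) hp hmem
      rw [Finset.insert_inter_of_notMem hpnot]
    have hq0' : ((insert p T ∩ Pq q0).offDiag.card : ℝ) / 2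
        = ((T ∩ Pq q0).offDiag.card : ℝ) / 2 + ((T ∩ Pq q0).card : ℝ) := by
      rw [Finset.insert_inter_of_mem hp,
        offDiag_insert_card (fun hmem => hpT (Finset.mem_inter.mp hmem).1)]
      push_cast; ring
    rw [hrest, hq0']
    ring
  unfold F
  rw [hcard, hc, hs, hEM]
  ring

lemma card_valid (P : Finset A) (Q : Finset Qt) (Pq : Qt → Finset A)
    (hP : P = Q.biUnion Pq)
    (hdisj : ∀ q1 ∈ Q, ∀ q2 ∈ Q, q1 ≠ q2 → Disjoint (Pq q1) (Pq q2))
    {S : Finset A} (hS : S ⊆ P) (h1 : ∀ q ∈ Q, (S ∩ Pq q).card = 1) :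
    S.card = Q.card := by
  have hrep : S = Q.biUnion (fun q => S ∩ Pq q) := by
    ext a
    simp only [Finset.mem_biUnion, Finset.mem_inter]
    constructor
    · intro ha
      have := hS ha
      rw [hP] at this
      obtain ⟨q, hq, hmem⟩ := Finset.mem_biUnion.mp this
      exact ⟨q, hq, ha, hmem⟩
    · rintro ⟨q, hq, ha, _⟩
      exact ha
  rw [hrep, Finset.card_biUnion]
  · rw [Finset.sum_congr rfl h1]
    simp
  · intro q1 hq1 q2 hq2 hne
    exact (hdisj q1 hq1 q2 hq2 hne).mono Finset.inter_subset_right Finset.inter_subset_right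

lemma F_valid (P : Finset A) (Q : Finset Qt) (Pq : Qt → Finset A)
    (c : A → ℝ) (s : A → A → ℝ) (wL wM : ℝ)
    (hP : P = Q.biUnion Pq)
    (hdisj : ∀ q1 ∈ Q, ∀ q2 ∈ Q, q1 ≠ q2 → Disjoint (Pq q1) (Pq q2))
    {S : Finset A} (hS : S ⊆ P) (h1 : ∀ q ∈ Q, (S ∩ Pq q).card = 1) :
    F Q Pq c s wL wM S = -wL * (Q.card : ℝ) + cost c s S := by
  have hz : ∑ q ∈ Q, ((S ∩ Pq q).offDiag.card : ℝ) / 2 = 0 :=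
    Finset.sum_eq_zero fun q hq => by
      rw [Finset.offDiag_card, h1 q hq]
      norm_num
  unfold F cost
  rw [hz, card_valid P Q Pq hP hdisj hS h1]
  ring

end MQOAux


/-- the minimum of the energy formula over all assignments equals
`-w_L·|Q|` plus the minimum execution cost over all plan sets arising from valid
assignments (both minima exist). -/
theorem min_energy_eq_min_cost
(P : Finset A) (Q : Finset Qt) (Pq : Qt → Finset A)
    (c : A → ℝ) (s : A → A → ℝ) (wL wM : ℝ)
    (hP : P = Q.biUnion Pq)
    (hdisj : ∀ q1 ∈ Q, ∀ q2 ∈ Q, q1 ≠ q2 → Disjoint (Pq q1) (Pq q2))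
    (hnonempty : ∀ q ∈ Q, (Pq q).Nonempty)
    (hsym : ∀ p1 p2 : A, s p1 p2 = s p2 p1)
    (hsdiag : ∀ p : A, s p p = 0)
    (hsnn : ∀ p1 ∈ P, ∀ p2 ∈ P, 0 ≤ s p1 p2)
    (hcnn : ∀ p ∈ P, 0 ≤ c p)
    (hwL : ∀ p ∈ P, c p < wL)
    (hwM : ∀ p1 ∈ P, wL + ∑ p2 ∈ P, s p1 p2 < wM) :
    ∃ em cm : ℝ,
      IsLeast {r : ℝ | ∃ X : A → ℝ, IsAssignment P X ∧ r = energy P Q Pq c s wL wM X} em ∧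
      IsLeast {r : ℝ | ∃ X : A → ℝ, IsAssignment P X ∧ IsValid Q Pq X ∧
        r = cost c s (selected P X)} cm ∧
      em = -wL * (Q.card : ℝ) + cm := by
  classical
  have hPq : ∀ q ∈ Q, Pq q ⊆ P := fun q hq => hP ▸ Finset.subset_biUnion_of_mem Pq hq
  obtain ⟨S₀, hS₀mem, hS₀min'⟩ := Finset.exists_min_image P.powerset
    (MQOAux.F Q Pq c s wL wM) ⟨∅, Finset.empty_mem_powerset P⟩
  have hS₀P : S₀ ⊆ P := Finset.mem_powerset.mp hS₀mem
  have hmin : ∀ S ⊆ P, MQOAux.F Q Pq c s wL wM S₀ ≤ MQOAux.F Q Pq c s wL wM S :=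
    fun S hS => hS₀min' S (Finset.mem_powerset.mpr hS)
  have hvalid : ∀ q ∈ Q, (S₀ ∩ Pq q).card = 1 := by
    intro q hq
    rcases Nat.lt_trichotomy (S₀ ∩ Pq q).card 1 with hlt | heq | hgt
    · exfalso
      have hzero : (S₀ ∩ Pq q).card = 0 := Nat.lt_one_iff.mp hlt
      obtain ⟨p, hpq⟩ := hnonempty q hq
      have hpP : p ∈ P := hPq q hq hpq
      have hpS : p ∉ S₀ := fun h => by
        have : p ∈ S₀ ∩ Pq q := Finset.mem_inter.mpr ⟨h, hpq⟩
        simp [Finset.card_eq_zero.mp hzero] at this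
      have hins := MQOAux.F_insert Q Pq c s wL wM hdisj hsym hq hpq hpS
      have hle := hmin (insert p S₀) (Finset.insert_subset hpP hS₀P)
      rw [hins, hzero] at hle
      have hsum : 0 ≤ ∑ x ∈ S₀, s p x :=
        Finset.sum_nonneg fun x hx => hsnn p hpP x (hS₀P hx)
      have := hwL p hpP
      push_cast at hle
      linarith
    · exact heq
    · exfalso
      obtain ⟨a, ha, b, hb, hab⟩ := Finset.one_lt_card.mp hgt
      have haS : a ∈ S₀ := (Finset.mem_inter.mp ha).1
      have haq : a ∈ Pq q := (Finset.mem_inter.mp ha).2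
      have haP : a ∈ P := hS₀P haS
      set T := S₀.erase a with hT
      have hTa : a ∉ T := Finset.notMem_erase a S₀
      have hS₀eq : S₀ = insert a T := (Finset.insert_erase haS).symm
      have hTP : T ⊆ P := (Finset.erase_subset a S₀).trans hS₀P
      have hins := MQOAux.F_insert Q Pq c s wL wM hdisj hsym hq haq hTa
      rw [← hS₀eq] at hins
      have hle := hmin T hTP
      have hk : 1 ≤ ((T ∩ Pq q).card : ℝ) := by
        have hbm : b ∈ T ∩ Pq q := by
          rw [hT, Finset.erase_inter]
          exact Finset.mem_erase.mpr ⟨fun e => hab e.symm, hb⟩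
        have := Finset.card_pos.mpr ⟨b, hbm⟩
        exact_mod_cast this
      have hsum : ∑ x ∈ T, s a x ≤ ∑ x ∈ P, s a x :=
        Finset.sum_le_sum_of_subset_of_nonneg hTP (fun x hx _ => hsnn a haP x hx)
      have hwM' := hwM a haP
      have hca := hcnn a haP
      have hwL' := hwL a haP
      have hwMpos : 0 < wM := by
        have : 0 ≤ ∑ x ∈ P, s a x :=
          Finset.sum_nonneg fun x hx => hsnn a haP x hx
        linarith
      have hmul : wM ≤ wM * ((T ∩ Pq q).card : ℝ) :=
        le_mul_of_one_le_right (le_of_lt hwMpos) hk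
      linarith
  have hFval := MQOAux.F_valid P Q Pq c s wL wM hP hdisj hS₀P hvalid
  refine ⟨MQOAux.F Q Pq c s wL wM S₀, cost c s S₀, ⟨?_, ?_⟩, ⟨?_, ?_⟩, ?_⟩
  · refine ⟨MQOAux.ind S₀, fun p _ => ?_, (MQOAux.energy_ind P Q Pq c s wL wM hS₀P).symm⟩
    by_cases h : p ∈ S₀ <;> simp [MQOAux.ind, h]
  · rintro r ⟨X, hX, rfl⟩
    have hsel : selected P X ⊆ P := Finset.filter_subset _ _
    have heq : energy P Q Pq c s wL wM X
        = energy P Q Pq c s wL wM (MQOAux.ind (selected P X)) := by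
      refine MQOAux.energy_congr P Q Pq c s wL wM hPq fun p hp => ?_
      rcases hX p hp with h0 | h1
      · have hns : p ∉ selected P X := fun h => by
          have := (Finset.mem_filter.mp h).2
          rw [h0] at this; norm_num at this
        simp [MQOAux.ind, hns, h0]
      · have hs : p ∈ selected P X := Finset.mem_filter.mpr ⟨hp, h1⟩
        simp [MQOAux.ind, hs, h1]
    rw [heq, MQOAux.energy_ind P Q Pq c s wL wM hsel]
    exact hmin _ hsel
  · refine ⟨MQOAux.ind S₀, fun p _ => ?_, ?_, ?_⟩
    · by_cases h : p ∈ S₀ <;> simp [MQOAux.ind, h]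
    · intro q hq
      obtain ⟨a, ha⟩ := Finset.card_eq_one.mp (hvalid q hq)
      have haS : a ∈ S₀ ∩ Pq q := ha ▸ Finset.mem_singleton_self a
      refine ⟨a, ⟨(Finset.mem_inter.mp haS).2,
        MQOAux.ind_eq_one_iff.mpr (Finset.mem_inter.mp haS).1⟩, ?_⟩
      rintro b ⟨hbq, hb1⟩
      have hbS : b ∈ S₀ := MQOAux.ind_eq_one_iff.mp hb1
      have hbm : b ∈ S₀ ∩ Pq q := Finset.mem_inter.mpr ⟨hbS, hbq⟩
      rw [ha] at hbm
      exact Finset.mem_singleton.mp hbm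
    · have hsel : selected P (MQOAux.ind S₀) = S₀ := by
        ext p
        simp only [selected, Finset.mem_filter]
        constructor
        · rintro ⟨_, h⟩; exact MQOAux.ind_eq_one_iff.mp h
        · intro h; exact ⟨hS₀P h, MQOAux.ind_eq_one_iff.mpr h⟩
      rw [hsel]
  · rintro r ⟨X, hX, hV, rfl⟩
    set S := selected P X with hSdef
    have hSP : S ⊆ P := Finset.filter_subset _ _
    have hv : ∀ q ∈ Q, (S ∩ Pq q).card = 1 := by
      intro q hq
      obtain ⟨p, ⟨hpq, hp1⟩, huniq⟩ := hV q hq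
      rw [Finset.card_eq_one]
      refine ⟨p, ?_⟩
      ext b
      simp only [Finset.mem_inter, Finset.mem_singleton]
      constructor
      · rintro ⟨hbS, hbq⟩
        exact huniq b ⟨hbq, (Finset.mem_filter.mp hbS).2⟩
      · rintro rfl
        exact ⟨Finset.mem_filter.mpr ⟨hPq q hq hpq, hp1⟩, hpq⟩
    have h1 := MQOAux.F_valid P Q Pq c s wL wM hP hdisj hSP hv
    have h2 := hmin S hSP
    linarith
  · linarith
end
end

section
/- Let X : P → {0,1} be an assignment, let q ∈ Q, and suppose X(p) = 0 for every p ∈ P_q. Pick any p* ∈ P_q and let X' be X modified by setting X'(p*) = 1 (and X'(p) = X(p) for all p ≠ p*). If all savings are nonnegative, then E(X') ≤ E(X) + c_{p*} - w_L. In particular, if w_L > c_{p*}, then E(X') < E(X). -/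
open Finset
open scoped Classical

noncomputable section

variable {A Qt : Type*}

lemma offDiag_sum_eq_double (P : Finset A) (f : A → A → ℝ) (hd : ∀ p ∈ P, f p p = 0) :
    ∑ pp ∈ P.offDiag, f pp.1 pp.2 = ∑ a ∈ P, ∑ b ∈ P, f a b := by
  have h1 : ∑ a ∈ P, ∑ b ∈ P, f a b = ∑ pp ∈ P ×ˢ P, f pp.1 pp.2 := by
    rw [Finset.sum_product]
  rw [h1, ← Finset.diag_union_offDiag P,
    Finset.sum_union (Finset.disjoint_diag_offDiag P), Finset.sum_diag]
  rw [Finset.sum_eq_zero hd, zero_add]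

/-- if no plan of query `q` is selected, selecting any plan `p*` of `q` changes
the energy by at most `c_{p*} - w_L`; in particular the energy strictly decreases when
`w_L > c_{p*}`. -/
theorem energy_decreases_adding_missing_plan
(P : Finset A) (Q : Finset Qt) (Pq : Qt → Finset A)
    (c : A → ℝ) (s : A → A → ℝ) (wL wM : ℝ)
    (hP : P = Q.biUnion Pq)
    (hdisj : ∀ q1 ∈ Q, ∀ q2 ∈ Q, q1 ≠ q2 → Disjoint (Pq q1) (Pq q2))
    (hnonempty : ∀ q ∈ Q, (Pq q).Nonempty)
    (hsym : ∀ p1 p2 : A, s p1 p2 = s p2 p1)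
    (hsdiag : ∀ p : A, s p p = 0)
    (hsnn : ∀ p1 ∈ P, ∀ p2 ∈ P, 0 ≤ s p1 p2)
    (X : A → ℝ) (hX : IsAssignment P X)
    (q : Qt) (hq : q ∈ Q) (hnone : ∀ p ∈ Pq q, X p = 0)
    (pstar : A) (hpstar : pstar ∈ Pq q) :
    energy P Q Pq c s wL wM (Function.update X pstar 1) ≤
      energy P Q Pq c s wL wM X + c pstar - wL ∧
    (c pstar < wL →
      energy P Q Pq c s wL wM (Function.update X pstar 1) < energy P Q Pq c s wL wM X) := by
  classical
  have hpP : pstar ∈ P := by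
    rw [hP]; exact Finset.mem_biUnion.2 ⟨q, hq, hpstar⟩
  have hXp : X pstar = 0 := hnone pstar hpstar
  set X' := Function.update X pstar 1 with hX'
  have hX'p : X' pstar = 1 := Function.update_self _ _ _
  have hX'ne : ∀ b, b ≠ pstar → X' b = X b := fun b hb => Function.update_of_ne hb _ _
  -- EL
  have hEL : EL P X' = EL P X - 1 := by
    unfold EL
    rw [← Finset.add_sum_erase _ X' hpP, ← Finset.add_sum_erase _ X hpP, hX'p, hXp,
      Finset.sum_congr rfl (fun b hb => hX'ne b (Finset.ne_of_mem_erase hb))]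
    ring
  -- EC
  have hEC : EC P c X' = EC P c X + c pstar := by
    unfold EC
    rw [← Finset.add_sum_erase _ (fun p => c p * X' p) hpP,
      ← Finset.add_sum_erase _ (fun p => c p * X p) hpP, hX'p, hXp,
      Finset.sum_congr rfl (fun b hb => by rw [hX'ne b (Finset.ne_of_mem_erase hb)])]
    ring
  -- EM
  have hEM : EM Q Pq X' = EM Q Pq X := by
    unfold EM
    refine Finset.sum_congr rfl fun q' hq' => ?_
    congr 1
    refine Finset.sum_congr rfl fun pp hpp => ?_
    obtain ⟨h1, h2, h12⟩ := Finset.mem_offDiag.1 hpp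
    by_cases hqq : q' = q
    · subst hqq
      have z1 : X pp.1 = 0 := hnone _ h1
      have z2 : X pp.2 = 0 := hnone _ h2
      rcases eq_or_ne pp.1 pstar with he | he
      · rw [hX'ne pp.2 (fun h => h12 (he.trans h.symm)), z1, z2, mul_zero, mul_zero]
      · rw [hX'ne pp.1 he, z1, zero_mul, zero_mul]
    · have hd := hdisj q' hq' q hq hqq
      have n1 : pp.1 ≠ pstar := fun h => (Finset.disjoint_left.1 hd h1) (h ▸ hpstar)
      have n2 : pp.2 ≠ pstar := fun h => (Finset.disjoint_left.1 hd h2) (h ▸ hpstar)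
      rw [hX'ne pp.1 n1, hX'ne pp.2 n2]
  -- ES
  set D := ∑ b ∈ P.erase pstar, s pstar b * X b with hD
  have hDnn : 0 ≤ D := by
    refine Finset.sum_nonneg fun b hb => ?_
    have hbP : b ∈ P := Finset.mem_of_mem_erase hb
    have hXb : 0 ≤ X b := by rcases hX b hbP with h | h <;> simp [h]
    exact mul_nonneg (hsnn pstar hpP b hbP) hXb
  have key : ∀ Y : A → ℝ,
      ∑ pp ∈ P.offDiag, s pp.1 pp.2 * Y pp.1 * Y pp.2 =
        ∑ a ∈ P, ∑ b ∈ P, s a b * Y a * Y b := by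
    intro Y
    exact offDiag_sum_eq_double P (fun a b => s a b * Y a * Y b) (fun p _ => by show s p p * Y p * Y p = 0; rw [hsdiag p]; ring)
  have hTX' : ∑ a ∈ P, ∑ b ∈ P, s a b * X' a * X' b
      = (∑ a ∈ P, ∑ b ∈ P, s a b * X a * X b) + 2 * D := by
    have inner : ∀ Y : A → ℝ, ∀ a : A,
        ∑ b ∈ P, s a b * Y a * Y b
          = s a pstar * Y a * Y pstar + ∑ b ∈ P.erase pstar, s a b * Y a * Y b := by
      intro Y a
      rw [← Finset.add_sum_erase _ (fun b => s a b * Y a * Y b) hpP]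
    rw [← Finset.add_sum_erase _ _ hpP, ← Finset.add_sum_erase
      _ (fun a => ∑ b ∈ P, s a b * X a * X b) hpP]
    rw [inner X' pstar, inner X pstar]
    have e1 : ∑ b ∈ P.erase pstar, s pstar b * X' pstar * X' b = D := by
      rw [hD]
      refine Finset.sum_congr rfl fun b hb => ?_
      rw [hX'p, hX'ne b (Finset.ne_of_mem_erase hb)]; ring
    have e2 : ∑ b ∈ P.erase pstar, s pstar b * X pstar * X b = 0 := by
      refine Finset.sum_eq_zero fun b hb => by rw [hXp]; ring
    rw [e1, e2, hX'p, hXp, hsdiag]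
    have e3 : ∑ a ∈ P.erase pstar, ∑ b ∈ P, s a b * X' a * X' b
        = (∑ a ∈ P.erase pstar, ∑ b ∈ P, s a b * X a * X b) + D := by
      rw [← Finset.sum_add_distrib]
      refine Finset.sum_congr rfl fun a ha => ?_
      have hane := Finset.ne_of_mem_erase ha
      rw [inner X' a, inner X a, hX'p, hXp, hX'ne a hane, hsym a pstar]
      have : ∑ b ∈ P.erase pstar, s a b * X a * X' b
          = ∑ b ∈ P.erase pstar, s a b * X a * X b :=
        Finset.sum_congr rfl fun b hb => by rw [hX'ne b (Finset.ne_of_mem_erase hb)]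
      rw [this]; ring
    rw [e3]; ring
  have hES : ES P s X' = ES P s X - D := by
    unfold ES
    rw [key X', key X, hTX']
    ring
  have hE : energy P Q Pq c s wL wM X' = energy P Q Pq c s wL wM X + c pstar - wL - D := by
    unfold energy
    rw [hEL, hEC, hEM, hES]; ring
  constructor
  · rw [hE]; linarith
  · intro hc; rw [hE]; linarith
end
end

section
/- Let G be a simple graph in which every vertex has degree at most Δ (with Δ ≥ 1), and let B_1, …, B_k be pairwise disjoint nonempty finite sets of vertices of G such that for every pair of distinct indices i ≠ j there exist vertices u ∈ B_i and v ∈ B_j that are adjacent in G. Then the total number of vertices used satisfies Σ_{i=1}^{k} |B_i| ≥ k(k-1)/Δ. -/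
open Finset

/-- if `G` has maximum degree at most `Δ ≥ 1` and `B_1, …, B_k` are pairwise
disjoint nonempty vertex sets such that any two of them are joined by an edge, then the total
number of vertices used is at least `k(k-1)/Δ`. -/
theorem total_qubits_lower_bound {V : Type*} [Fintype V] [DecidableEq V]
    (G : SimpleGraph V) [DecidableRel G.Adj]
    (Δ k : ℕ) (hΔ : 1 ≤ Δ) (hdeg : ∀ v : V, G.degree v ≤ Δ)
    (B : Fin k → Finset V)
    (hne : ∀ i, (B i).Nonempty)
    (hdisj : ∀ i j : Fin k, i ≠ j → Disjoint (B i) (B j))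
    (hadj : ∀ i j : Fin k, i ≠ j → ∃ u ∈ B i, ∃ v ∈ B j, G.Adj u v) :
    (k : ℝ) * ((k : ℝ) - 1) / (Δ : ℝ) ≤ ∑ i : Fin k, ((B i).card : ℝ) := by
  classical
  rcases Nat.eq_zero_or_pos k with hk | hk
  · subst hk; simp
  choose u hu v hv ha using hadj
  have key : ∀ i : Fin k, (k - 1 : ℕ) ≤ Δ * (B i).card := by
    intro i
    set S := (B i).biUnion (fun x => G.neighborFinset x) with hS
    have hcardS : S.card ≤ Δ * (B i).card := by
      calc S.card ≤ ∑ x ∈ B i, (G.neighborFinset x).card := Finset.card_biUnion_le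
        _ ≤ ∑ x ∈ B i, Δ := Finset.sum_le_sum (fun x _ => by
              simpa [SimpleGraph.card_neighborFinset_eq_degree] using hdeg x)
        _ = Δ * (B i).card := by rw [Finset.sum_const, smul_eq_mul, mul_comm]
    have hle : ({i}ᶜ : Finset (Fin k)).card ≤ S.card := by
      apply Finset.card_le_card_of_injOn
        (fun j => if h : i ≠ j then v i j h else (hne i).choose)
      · intro j hj
        have hij : i ≠ j := by
          simp only [Finset.coe_compl, Set.mem_compl_iff, Finset.coe_singleton,
            Set.mem_singleton_iff, Finset.mem_compl, Finset.mem_singleton, Finset.mem_coe] at hj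
          exact fun h => hj h.symm
        simp only [dif_pos hij]
        exact Finset.mem_biUnion.2 ⟨u i j hij, hu i j hij, by
          simpa using ha i j hij⟩
      · intro j1 h1 j2 h2 heq
        have h1' : i ≠ j1 := by
          simp only [Finset.coe_compl, Set.mem_compl_iff, Finset.coe_singleton,
            Set.mem_singleton_iff] at h1
          exact fun h => h1 h.symm
        have h2' : i ≠ j2 := by
          simp only [Finset.coe_compl, Set.mem_compl_iff, Finset.coe_singleton,
            Set.mem_singleton_iff] at h2
          exact fun h => h2 h.symm
        simp only [dif_pos h1', dif_pos h2'] at heq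
        by_contra hne'
        have hd := hdisj j1 j2 hne'
        exact (Finset.disjoint_left.1 hd) (hv i j1 h1') (heq ▸ hv i j2 h2')
    have hcompl : ({i}ᶜ : Finset (Fin k)).card = k - 1 := by
      rw [Finset.card_compl, Finset.card_singleton, Fintype.card_fin]
    omega
  have hΔR : (0 : ℝ) < (Δ : ℝ) := by exact_mod_cast hΔ
  have step : ∀ i : Fin k, ((k : ℝ) - 1) / (Δ : ℝ) ≤ ((B i).card : ℝ) := by
    intro i
    rw [div_le_iff₀ hΔR]
    have := key i
    have h' : ((k - 1 : ℕ) : ℝ) ≤ ((Δ * (B i).card : ℕ) : ℝ) := by exact_mod_cast this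
    rw [Nat.cast_sub hk, Nat.cast_mul] at h'
    simpa [mul_comm] using h'
  calc (k : ℝ) * ((k : ℝ) - 1) / (Δ : ℝ)
      = ∑ _i : Fin k, ((k : ℝ) - 1) / (Δ : ℝ) := by
        rw [Finset.sum_const, Finset.card_univ, Fintype.card_fin, nsmul_eq_mul, mul_div_assoc]
    _ ≤ ∑ i : Fin k, ((B i).card : ℝ) := Finset.sum_le_sum (fun i _ => step i)
end

section
/- Assume all execution costs are nonnegative (c_p ≥ 0 for all p ∈ P), all savings are nonnegative, w_L > max_{p∈P} c_p, and w_M > w_L + max_{p1∈P} Σ_{p2∈P} s_{p1,p2}. Then an assignment X : P → {0,1} minimizes the energy formula E if and only if X is valid and its selected plan set P_e = {p : X(p) = 1} has minimal execution cost C(P_e) among all plan sets arising from valid assignments. -/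
open Finset
open scoped Classical

noncomputable section

variable {A Qt : Type*}

namespace MQO

def ind (T : Finset A) : A → ℝ := fun p => if p ∈ T then 1 else 0

lemma ind_one {T : Finset A} {p : A} (h : p ∈ T) : ind T p = 1 := if_pos h
lemma ind_zero {T : Finset A} {p : A} (h : p ∉ T) : ind T p = 0 := if_neg h

lemma ind_isAssignment (P T : Finset A) : IsAssignment P (ind T) := by
  intro p _; unfold ind; split <;> simp

lemma selected_ind {P T : Finset A} (hT : T ⊆ P) : selected P (ind T) = T := by
  ext p
  simp only [selected, Finset.mem_filter]
  constructor
  · rintro ⟨-, h⟩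
    by_contra hpt
    rw [ind_zero hpt] at h; norm_num at h
  · intro h; exact ⟨hT h, ind_one h⟩

lemma sum_ind {P T : Finset A} (hT : T ⊆ P) (f : A → ℝ) :
    ∑ p ∈ P, f p * ind T p = ∑ p ∈ T, f p := by
  have h1 : ∑ p ∈ P, f p * ind T p = ∑ p ∈ P, if p ∈ T then f p else 0 :=
    Finset.sum_congr rfl fun p _ => by unfold ind; split <;> ring
  rw [h1, Finset.sum_ite_mem, Finset.inter_eq_right.mpr hT]

lemma offDiag_inter_filter (S T : Finset A) :
    (S ∩ T).offDiag = S.offDiag.filter (fun pp => pp.1 ∈ T ∧ pp.2 ∈ T) := by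
  ext ⟨a, b⟩
  simp only [Finset.mem_offDiag, Finset.mem_filter, Finset.mem_inter]
  tauto

lemma sum_offDiag_ind (S T : Finset A) (f : A → A → ℝ) :
    ∑ pp ∈ S.offDiag, f pp.1 pp.2 * ind T pp.1 * ind T pp.2
      = ∑ pp ∈ (S ∩ T).offDiag, f pp.1 pp.2 := by
  rw [offDiag_inter_filter, Finset.sum_filter]
  refine Finset.sum_congr rfl fun pp _ => ?_
  by_cases h1 : pp.1 ∈ T <;> by_cases h2 : pp.2 ∈ T <;>
    simp [ind, h1, h2]

lemma sum_offDiag_ind_one (S T : Finset A) :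
    ∑ pp ∈ S.offDiag, ind T pp.1 * ind T pp.2 = ((S ∩ T).offDiag.card : ℝ) := by
  have hc : (((S ∩ T).offDiag.card : ℕ) : ℝ) = ∑ pp ∈ (S ∩ T).offDiag, (1 : ℝ) := by simp
  rw [hc, offDiag_inter_filter, Finset.sum_filter]
  refine Finset.sum_congr rfl fun pp _ => ?_
  by_cases h1 : pp.1 ∈ T <;> by_cases h2 : pp.2 ∈ T <;> simp [ind, h1, h2]

def Mterm (Q : Finset Qt) (Pq : Qt → Finset A) (T : Finset A) : ℝ :=
  ∑ q ∈ Q, (1 / 2) * (((Pq q ∩ T).card : ℝ) * (((Pq q ∩ T).card : ℝ) - 1))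

lemma card_offDiag_real (S : Finset A) :
    ((S.offDiag.card : ℝ)) = (S.card : ℝ) * ((S.card : ℝ) - 1) := by
  rw [Finset.offDiag_card]
  have h : S.card ≤ S.card * S.card := by nlinarith [Nat.zero_le S.card]
  rw [Nat.cast_sub h]; push_cast; ring

variable {P : Finset A} {Q : Finset Qt} {Pq : Qt → Finset A} {c : A → ℝ}
  {s : A → A → ℝ} {wL wM : ℝ}

lemma hsub_of (hP : P = Q.biUnion Pq) : ∀ q ∈ Q, Pq q ⊆ P := fun q hq =>
  hP ▸ Finset.subset_biUnion_of_mem Pq hq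

lemma En_closed (hP : P = Q.biUnion Pq) {T : Finset A} (hT : T ⊆ P) :
    energy P Q Pq c s wL wM (ind T)
      = -(wL * T.card) + wM * Mterm Q Pq T + cost c s T := by
  unfold energy EL EM EC ES cost Mterm
  have h1 : ∑ p ∈ P, ind T p = (T.card : ℝ) := by
    have := sum_ind hT (fun _ => (1 : ℝ))
    simp only [one_mul] at this
    rw [this, Finset.sum_const, nsmul_eq_mul, mul_one]
  have h2 : ∑ p ∈ P, c p * ind T p = ∑ p ∈ T, c p := sum_ind hT c
  have h3 : ∑ pp ∈ P.offDiag, s pp.1 pp.2 * ind T pp.1 * ind T pp.2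
      = ∑ pp ∈ T.offDiag, s pp.1 pp.2 := by
    rw [sum_offDiag_ind, Finset.inter_eq_right.mpr hT]
  have h4 : ∀ q ∈ Q, (1 / 2 : ℝ) * ∑ pp ∈ (Pq q).offDiag, ind T pp.1 * ind T pp.2
      = (1 / 2) * (((Pq q ∩ T).card : ℝ) * (((Pq q ∩ T).card : ℝ) - 1)) := by
    intro q hq
    rw [sum_offDiag_ind_one, card_offDiag_real]
  rw [h1, h2, h3, Finset.sum_congr rfl h4]
  ring

lemma energy_eq (hP : P = Q.biUnion Pq) {X : A → ℝ} (hX : IsAssignment P X) :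
    energy P Q Pq c s wL wM X = energy P Q Pq c s wL wM (ind (selected P X)) := by
  have hsub := hsub_of hP
  have key : ∀ p ∈ P, X p = ind (selected P X) p := by
    intro p hp
    rcases hX p hp with h | h
    · rw [h]; exact (ind_zero (by simp [selected, h])).symm
    · rw [h]; exact (ind_one (by simp [selected, hp, h])).symm
  unfold energy EL EM EC ES
  rw [Finset.sum_congr rfl key,
    Finset.sum_congr rfl (fun p hp => by rw [key p hp] :
      ∀ p ∈ P, c p * X p = c p * ind (selected P X) p),
    Finset.sum_congr rfl (fun pp hpp => by
      obtain ⟨h1, h2, -⟩ := Finset.mem_offDiag.mp hpp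
      rw [key _ h1, key _ h2] :
      ∀ pp ∈ P.offDiag, s pp.1 pp.2 * X pp.1 * X pp.2
        = s pp.1 pp.2 * ind (selected P X) pp.1 * ind (selected P X) pp.2),
    Finset.sum_congr rfl (fun q hq => by
      rw [Finset.sum_congr rfl (fun pp hpp => by
        obtain ⟨h1, h2, -⟩ := Finset.mem_offDiag.mp hpp
        rw [key _ (hsub q hq h1), key _ (hsub q hq h2)] :
        ∀ pp ∈ (Pq q).offDiag, X pp.1 * X pp.2
          = ind (selected P X) pp.1 * ind (selected P X) pp.2)] :
      ∀ q ∈ Q, (1/2 : ℝ) * ∑ pp ∈ (Pq q).offDiag, X pp.1 * X pp.2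
        = (1/2 : ℝ) * ∑ pp ∈ (Pq q).offDiag,
            ind (selected P X) pp.1 * ind (selected P X) pp.2)]

lemma valid_iff (hP : P = Q.biUnion Pq) (X : A → ℝ) :
    IsValid Q Pq X ↔ ∀ q ∈ Q, (Pq q ∩ selected P X).card = 1 := by
  have hsub := hsub_of hP
  constructor
  · intro h q hq
    obtain ⟨p, ⟨hp1, hp2⟩, hu⟩ := h q hq
    rw [Finset.card_eq_one]
    refine ⟨p, ?_⟩
    ext x
    simp only [Finset.mem_inter, Finset.mem_singleton, selected, Finset.mem_filter]
    constructor
    · rintro ⟨hx1, -, hx2⟩; exact hu x ⟨hx1, hx2⟩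
    · rintro rfl; exact ⟨hp1, hsub q hq hp1, hp2⟩
  · intro h q hq
    obtain ⟨p, hp⟩ := Finset.card_eq_one.mp (h q hq)
    have hpm : p ∈ Pq q ∩ selected P X := hp ▸ Finset.mem_singleton_self p
    simp only [Finset.mem_inter, selected, Finset.mem_filter] at hpm
    refine ⟨p, ⟨hpm.1, hpm.2.2⟩, ?_⟩
    rintro y ⟨hy1, hy2⟩
    have hmem : y ∈ Pq q ∩ selected P X :=
      Finset.mem_inter.mpr ⟨hy1, Finset.mem_filter.mpr ⟨hsub q hq hy1, hy2⟩⟩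
    rw [hp] at hmem
    exact Finset.mem_singleton.mp hmem

lemma card_eq_sum (hP : P = Q.biUnion Pq)
    (hdisj : ∀ q1 ∈ Q, ∀ q2 ∈ Q, q1 ≠ q2 → Disjoint (Pq q1) (Pq q2))
    {T : Finset A} (hT : T ⊆ P) : T.card = ∑ q ∈ Q, (Pq q ∩ T).card := by
  have hbi : T = Q.biUnion (fun q => Pq q ∩ T) := by
    ext x
    simp only [Finset.mem_biUnion, Finset.mem_inter]
    constructor
    · intro hx
      obtain ⟨q, hq, hxq⟩ := Finset.mem_biUnion.mp (hP ▸ hT hx)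
      exact ⟨q, hq, hxq, hx⟩
    · rintro ⟨q, hq, -, hx⟩; exact hx
  conv_lhs => rw [hbi]
  exact Finset.card_biUnion fun q1 h1 q2 h2 hne =>
    ((hdisj q1 h1 q2 h2 hne).mono Finset.inter_subset_left Finset.inter_subset_left)

lemma En_valid (hP : P = Q.biUnion Pq)
    (hdisj : ∀ q1 ∈ Q, ∀ q2 ∈ Q, q1 ≠ q2 → Disjoint (Pq q1) (Pq q2))
    {T : Finset A} (hT : T ⊆ P) (hk : ∀ q ∈ Q, (Pq q ∩ T).card = 1) :
    energy P Q Pq c s wL wM (ind T) = -(wL * Q.card) + cost c s T := by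
  rw [En_closed hP hT]
  have h1 : (T.card : ℝ) = Q.card := by
    rw [card_eq_sum hP hdisj hT, Finset.sum_congr rfl hk]
    simp
  have h2 : Mterm Q Pq T = 0 := Finset.sum_eq_zero fun q hq => by
    rw [hk q hq]; norm_num
  rw [h1, h2]; ring

lemma En_insert (hP : P = Q.biUnion Pq)
    (hdisj : ∀ q1 ∈ Q, ∀ q2 ∈ Q, q1 ≠ q2 → Disjoint (Pq q1) (Pq q2))
    (hsym : ∀ p1 p2 : A, s p1 p2 = s p2 p1)
    {T : Finset A} (hT : T ⊆ P) {p : A} (hpT : p ∉ T)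
    {q0 : Qt} (hq0 : q0 ∈ Q) (hpq : p ∈ Pq q0) :
    energy P Q Pq c s wL wM (ind (insert p T))
      = energy P Q Pq c s wL wM (ind T)
        + (-wL + wM * ((Pq q0 ∩ T).card : ℝ) + c p - ∑ t ∈ T, s p t) := by
  have hpP : p ∈ P := hP ▸ Finset.mem_biUnion.mpr ⟨q0, hq0, hpq⟩
  have hT' : insert p T ⊆ P := Finset.insert_subset hpP hT
  rw [En_closed hP hT', En_closed hP hT]
  have hcard : (((insert p T).card : ℕ) : ℝ) = (T.card : ℝ) + 1 := by
    rw [Finset.card_insert_of_notMem hpT]; push_cast; ring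
  have hM : Mterm Q Pq (insert p T) = Mterm Q Pq T + ((Pq q0 ∩ T).card : ℝ) := by
    unfold Mterm
    rw [← Finset.sum_erase_add _ _ hq0, ← Finset.sum_erase_add _ _ hq0]
    have hrest : ∀ q ∈ Q.erase q0,
        (1 / 2 : ℝ) * (((Pq q ∩ insert p T).card : ℝ) * (((Pq q ∩ insert p T).card : ℝ) - 1))
          = (1 / 2 : ℝ) * (((Pq q ∩ T).card : ℝ) * (((Pq q ∩ T).card : ℝ) - 1)) := by
      intro q hq
      obtain ⟨hne, hqQ⟩ := Finset.mem_erase.mp hq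
      have hpnot : p ∉ Pq q := fun hc =>
        Finset.disjoint_left.mp (hdisj q hqQ q0 hq0 hne) hc hpq
      rw [Finset.inter_insert_of_notMem hpnot]
    rw [Finset.sum_congr rfl hrest]
    have hq0eq : Pq q0 ∩ insert p T = insert p (Pq q0 ∩ T) :=
      Finset.inter_insert_of_mem hpq
    have hpnotin : p ∉ Pq q0 ∩ T := fun hc => hpT (Finset.mem_inter.mp hc).2
    rw [hq0eq, Finset.card_insert_of_notMem hpnotin]
    push_cast
    ring
  have hcost : cost c s (insert p T) = cost c s T + c p - ∑ t ∈ T, s p t := by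
    unfold cost
    rw [Finset.sum_insert hpT, Finset.offDiag_insert hpT]
    have d1 : Disjoint (T.offDiag ∪ {p} ×ˢ T) (T ×ˢ {p}) := by
      rw [Finset.disjoint_left]
      rintro ⟨a, b⟩ hab hab'
      obtain ⟨-, hb⟩ := Finset.mem_product.mp hab'
      have hbp : b = p := Finset.mem_singleton.mp hb
      rcases Finset.mem_union.mp hab with h | h
      · exact hpT (hbp ▸ (Finset.mem_offDiag.mp h).2.1)
      · exact hpT (hbp ▸ (Finset.mem_product.mp h).2)
    have d2 : Disjoint (T.offDiag) ({p} ×ˢ T) := by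
      rw [Finset.disjoint_left]
      rintro ⟨a, b⟩ hab hab'
      obtain ⟨ha, -⟩ := Finset.mem_product.mp hab'
      exact hpT ((Finset.mem_singleton.mp ha) ▸ (Finset.mem_offDiag.mp hab).1)
    rw [Finset.sum_union d1, Finset.sum_union d2]
    have e1 : ∑ pp ∈ {p} ×ˢ T, s pp.1 pp.2 = ∑ t ∈ T, s p t := by
      rw [Finset.sum_product, Finset.sum_singleton]
    have e2 : ∑ pp ∈ T ×ˢ {p}, s pp.1 pp.2 = ∑ t ∈ T, s p t := by
      rw [Finset.sum_product]
      exact Finset.sum_congr rfl fun t _ => by rw [Finset.sum_singleton, hsym]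
    rw [e1, e2]
    ring
  rw [hcard, hM, hcost]
  ring

lemma En_erase (hP : P = Q.biUnion Pq)
    (hdisj : ∀ q1 ∈ Q, ∀ q2 ∈ Q, q1 ≠ q2 → Disjoint (Pq q1) (Pq q2))
    (hsym : ∀ p1 p2 : A, s p1 p2 = s p2 p1)
    {T : Finset A} (hT : T ⊆ P) {p : A} (hpT : p ∈ T)
    {q0 : Qt} (hq0 : q0 ∈ Q) (hpq : p ∈ Pq q0) :
    energy P Q Pq c s wL wM (ind (T.erase p))
      = energy P Q Pq c s wL wM (ind T)
        + (wL - wM * ((Pq q0 ∩ T.erase p).card : ℝ) - c p + ∑ t ∈ T.erase p, s p t) := by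
  have h := En_insert (c := c) (wL := wL) (wM := wM) hP hdisj hsym
    ((Finset.erase_subset p T).trans hT) (Finset.notMem_erase p T) hq0 hpq
  rw [Finset.insert_erase hpT] at h
  linarith

def defect (Q : Finset Qt) (Pq : Qt → Finset A) (T : Finset A) : ℕ :=
  ∑ q ∈ Q, ((Pq q ∩ T).card - 1 + (1 - (Pq q ∩ T).card))

lemma step (hP : P = Q.biUnion Pq)
    (hdisj : ∀ q1 ∈ Q, ∀ q2 ∈ Q, q1 ≠ q2 → Disjoint (Pq q1) (Pq q2))
    (hnonempty : ∀ q ∈ Q, (Pq q).Nonempty)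
    (hsym : ∀ p1 p2 : A, s p1 p2 = s p2 p1)
    (hsnn : ∀ p1 ∈ P, ∀ p2 ∈ P, 0 ≤ s p1 p2)
    (hcnn : ∀ p ∈ P, 0 ≤ c p)
    (hwL : ∀ p ∈ P, c p < wL)
    (hwM : ∀ p1 ∈ P, wL + ∑ p2 ∈ P, s p1 p2 < wM)
    {T : Finset A} (hT : T ⊆ P) {q0 : Qt} (hq0 : q0 ∈ Q)
    (hk : (Pq q0 ∩ T).card ≠ 1) :
    ∃ T', T' ⊆ P ∧ defect Q Pq T' < defect Q Pq T ∧
      energy P Q Pq c s wL wM (ind T') < energy P Q Pq c s wL wM (ind T) := by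
  have hdrest : ∀ p ∈ Pq q0, ∀ T' : Finset A,
      (∀ q ∈ Q.erase q0, Pq q ∩ T' = Pq q ∩ T) →
      ((Pq q0 ∩ T').card - 1 + (1 - (Pq q0 ∩ T').card))
          < ((Pq q0 ∩ T).card - 1 + (1 - (Pq q0 ∩ T).card)) →
      defect Q Pq T' < defect Q Pq T := by
    intro p hp T' hrest hlt
    unfold defect
    rw [← Finset.sum_erase_add _ _ hq0, ← Finset.sum_erase_add _ _ hq0,
      Finset.sum_congr rfl (fun q hq => by rw [hrest q hq])]
    omega
  have hinter : ∀ p ∈ Pq q0, ∀ q ∈ Q.erase q0, p ∉ Pq q := by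
    intro p hp q hq
    obtain ⟨hne, hqQ⟩ := Finset.mem_erase.mp hq
    exact fun hc => Finset.disjoint_left.mp (hdisj q hqQ q0 hq0 hne) hc hp
  rcases Nat.lt_or_ge (Pq q0 ∩ T).card 1 with h | h
  · -- empty intersection: insert a plan
    have hempty : Pq q0 ∩ T = ∅ := Finset.card_eq_zero.mp (Nat.lt_one_iff.mp h)
    obtain ⟨p, hpq⟩ := hnonempty q0 hq0
    have hpP : p ∈ P := hP ▸ Finset.mem_biUnion.mpr ⟨q0, hq0, hpq⟩
    have hpT : p ∉ T := fun hc =>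
      Finset.notMem_empty p (hempty ▸ Finset.mem_inter.mpr ⟨hpq, hc⟩)
    refine ⟨insert p T, Finset.insert_subset hpP hT, ?_, ?_⟩
    · refine hdrest p hpq _ (fun q hq =>
        Finset.inter_insert_of_notMem (hinter p hpq q hq)) ?_
      have : Pq q0 ∩ insert p T = insert p (Pq q0 ∩ T) := Finset.inter_insert_of_mem hpq
      rw [this, Finset.card_insert_of_notMem (fun hc => hpT (Finset.mem_inter.mp hc).2),
        hempty]
      simp
    · rw [En_insert hP hdisj hsym hT hpT hq0 hpq, hempty]
      have hs0 : (0:ℝ) ≤ ∑ t ∈ T, s p t :=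
        Finset.sum_nonneg fun t ht => hsnn p hpP t (hT ht)
      have := hwL p hpP
      simp only [Finset.card_empty, Nat.cast_zero]
      linarith
  · -- at least two plans: erase one
    have h2 : 2 ≤ (Pq q0 ∩ T).card := by omega
    obtain ⟨p, hp⟩ := Finset.card_pos.mp (show 0 < (Pq q0 ∩ T).card by omega)
    obtain ⟨hpq, hpT⟩ := Finset.mem_inter.mp hp
    have hpP : p ∈ P := hT hpT
    have herase : Pq q0 ∩ T.erase p = (Pq q0 ∩ T).erase p := by
      ext x
      simp only [Finset.mem_inter, Finset.mem_erase]
      tauto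
    have hkcard : (Pq q0 ∩ T.erase p).card = (Pq q0 ∩ T).card - 1 := by
      rw [herase, Finset.card_erase_of_mem hp]
    refine ⟨T.erase p, (Finset.erase_subset p T).trans hT, ?_, ?_⟩
    · refine hdrest p hpq _ (fun q hq => by
        ext x
        simp only [Finset.mem_inter, Finset.mem_erase]
        constructor
        · rintro ⟨hx1, -, hx2⟩; exact ⟨hx1, hx2⟩
        · rintro ⟨hx1, hx2⟩
          exact ⟨hx1, fun hxp => (hinter p hpq q hq) (hxp ▸ hx1), hx2⟩) ?_
      omega
    · rw [En_erase hP hdisj hsym hT hpT hq0 hpq, hkcard]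
      have hk1 : (1:ℝ) ≤ (((Pq q0 ∩ T).card - 1 : ℕ) : ℝ) := by
        have : 1 ≤ (Pq q0 ∩ T).card - 1 := by omega
        exact_mod_cast this
      have hssub : ∑ t ∈ T.erase p, s p t ≤ ∑ t ∈ P, s p t :=
        Finset.sum_le_sum_of_subset_of_nonneg ((Finset.erase_subset p T).trans hT)
          (fun t ht _ => hsnn p hpP t ht)
      have hwm := hwM p hpP
      have hc := hcnn p hpP
      have hcl := hwL p hpP
      have hsnn' : (0:ℝ) ≤ ∑ t ∈ P, s p t :=
        Finset.sum_nonneg fun t ht => hsnn p hpP t ht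
      have hwMpos : 0 < wM := by linarith
      nlinarith [mul_le_mul_of_nonneg_left hk1 (le_of_lt hwMpos)]

lemma repair (hP : P = Q.biUnion Pq)
    (hdisj : ∀ q1 ∈ Q, ∀ q2 ∈ Q, q1 ≠ q2 → Disjoint (Pq q1) (Pq q2))
    (hnonempty : ∀ q ∈ Q, (Pq q).Nonempty)
    (hsym : ∀ p1 p2 : A, s p1 p2 = s p2 p1)
    (hsnn : ∀ p1 ∈ P, ∀ p2 ∈ P, 0 ≤ s p1 p2)
    (hcnn : ∀ p ∈ P, 0 ≤ c p)
    (hwL : ∀ p ∈ P, c p < wL)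
    (hwM : ∀ p1 ∈ P, wL + ∑ p2 ∈ P, s p1 p2 < wM) :
    ∀ n : ℕ, ∀ T : Finset A, T ⊆ P → defect Q Pq T ≤ n →
      ∃ T', T' ⊆ P ∧ (∀ q ∈ Q, (Pq q ∩ T').card = 1) ∧
        energy P Q Pq c s wL wM (ind T') ≤ energy P Q Pq c s wL wM (ind T) := by
  intro n
  induction n with
  | zero =>
    intro T hT hd
    refine ⟨T, hT, fun q hq => ?_, le_refl _⟩
    have := Finset.sum_eq_zero_iff.mp (Nat.le_zero.mp hd) q hq
    omega
  | succ n ih =>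
    intro T hT hd
    by_cases hall : ∀ q ∈ Q, (Pq q ∩ T).card = 1
    · exact ⟨T, hT, hall, le_refl _⟩
    · push_neg at hall
      obtain ⟨q0, hq0, hk⟩ := hall
      obtain ⟨T', hT', hdlt, hEn⟩ :=
        step hP hdisj hnonempty hsym hsnn hcnn hwL hwM hT hq0 hk
      obtain ⟨T'', h1, h2, h3⟩ := ih T' hT' (by omega)
      exact ⟨T'', h1, h2, le_of_lt (lt_of_le_of_lt h3 hEn)⟩

end MQO

/-- an assignment minimizes the energy formula if and only if it is valid and
its selected plan set has minimal execution cost among all plan sets arising from valid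
assignments. -/
theorem energy_minimizer_iff_cost_optimal
(P : Finset A) (Q : Finset Qt) (Pq : Qt → Finset A)
    (c : A → ℝ) (s : A → A → ℝ) (wL wM : ℝ)
    (hP : P = Q.biUnion Pq)
    (hdisj : ∀ q1 ∈ Q, ∀ q2 ∈ Q, q1 ≠ q2 → Disjoint (Pq q1) (Pq q2))
    (hnonempty : ∀ q ∈ Q, (Pq q).Nonempty)
    (hsym : ∀ p1 p2 : A, s p1 p2 = s p2 p1)
    (hsdiag : ∀ p : A, s p p = 0)
    (hsnn : ∀ p1 ∈ P, ∀ p2 ∈ P, 0 ≤ s p1 p2)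
    (hcnn : ∀ p ∈ P, 0 ≤ c p)
    (hwL : ∀ p ∈ P, c p < wL)
    (hwM : ∀ p1 ∈ P, wL + ∑ p2 ∈ P, s p1 p2 < wM)
    (X : A → ℝ) (hX : IsAssignment P X) :
    (∀ Y : A → ℝ, IsAssignment P Y →
        energy P Q Pq c s wL wM X ≤ energy P Q Pq c s wL wM Y) ↔
      (IsValid Q Pq X ∧
        ∀ Y : A → ℝ, IsAssignment P Y → IsValid Q Pq Y →
          cost c s (selected P X) ≤ cost c s (selected P Y)) := by
  have hTX : selected P X ⊆ P := Finset.filter_subset _ _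
  have hEx : energy P Q Pq c s wL wM X
      = energy P Q Pq c s wL wM (MQO.ind (selected P X)) := MQO.energy_eq hP hX
  constructor
  · intro hmin
    have hvalid : IsValid Q Pq X := by
      rw [MQO.valid_iff hP]
      by_contra hc'
      push_neg at hc'
      obtain ⟨q0, hq0, hk⟩ := hc'
      obtain ⟨T', hT', -, hEn⟩ :=
        MQO.step hP hdisj hnonempty hsym hsnn hcnn hwL hwM hTX hq0 hk
      have h1 := hmin (MQO.ind T') (MQO.ind_isAssignment P T')
      rw [hEx] at h1
      linarith
    refine ⟨hvalid, ?_⟩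
    intro Y hY hYv
    have hkX := (MQO.valid_iff hP X).mp hvalid
    have hkY := (MQO.valid_iff hP Y).mp hYv
    have h1 : energy P Q Pq c s wL wM X = -(wL * Q.card) + cost c s (selected P X) := by
      rw [hEx, MQO.En_valid hP hdisj hTX hkX]
    have hTY : selected P Y ⊆ P := Finset.filter_subset _ _
    have h2 : energy P Q Pq c s wL wM Y = -(wL * Q.card) + cost c s (selected P Y) := by
      rw [MQO.energy_eq hP hY, MQO.En_valid hP hdisj hTY hkY]
    have h3 := hmin Y hY
    linarith
  · rintro ⟨hvalid, hcost⟩ Y hY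
    have hkX := (MQO.valid_iff hP X).mp hvalid
    have h1 : energy P Q Pq c s wL wM X = -(wL * Q.card) + cost c s (selected P X) := by
      rw [hEx, MQO.En_valid hP hdisj hTX hkX]
    have hTY : selected P Y ⊆ P := Finset.filter_subset _ _
    obtain ⟨T', hT', hk', hEn⟩ := MQO.repair hP hdisj hnonempty hsym hsnn hcnn hwL hwM
      (MQO.defect Q Pq (selected P Y)) (selected P Y) hTY le_rfl
    have hselT' : selected P (MQO.ind T') = T' := MQO.selected_ind hT'
    have hYv : IsValid Q Pq (MQO.ind T') := by
      rw [MQO.valid_iff hP, hselT']; exact hk'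
    have hcle := hcost (MQO.ind T') (MQO.ind_isAssignment P T') hYv
    rw [hselT'] at hcle
    have h2 : energy P Q Pq c s wL wM (MQO.ind T') = -(wL * Q.card) + cost c s T' :=
      MQO.En_valid hP hdisj hT' hk'
    have h3 := MQO.energy_eq (c := c) (s := s) (wL := wL) (wM := wM) hP hY
    linarith
end
end
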